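/- arXiv:2408.11105 — 3 statements merged into one kernel-verified Lean document; each statement's English description precedes it below -/
import Mathlib

section
/- Under the hypotheses of the moment-operator lemma, the spectral gap satisfies Δ_ν^{(t)} ≥ 1 − (F_ν(m) − t!)^{1/(2m)}, where F_ν(m) := tr[(M_ν^{(t)})^{2m}] is the frame potential of the m-fold convolution of ν. -/
open Matrix
open scoped Classical

/-- The second-largest eigenvalue: the largest eigenvalue strictly below `1`
(or `0` if none exists). -/
noncomputable def lambda2 {N : ℕ} {A : Matrix (Fin N) (Fin N) ℂ} (hA : A.IsHermitian) : ℝ :=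
  ⨆ i, if hA.eigenvalues i = 1 then 0 else hA.eigenvalues i

lemma conj_pow_aux {N : ℕ} (u d : Matrix (Fin N) (Fin N) ℂ)
    (h1 : u * star u = 1) (h2 : star u * u = 1) (k : ℕ) :
    (u * d * star u) ^ k = u * d ^ k * star u := by
  induction k with
  | zero => simp [h1]
  | succ n ih =>
      rw [pow_succ, ih, pow_succ]
      calc u * d ^ n * star u * (u * d * star u)
          = u * d ^ n * (star u * u) * d * star u := by
            simp only [mul_assoc]
        _ = u * (d ^ n * d) * star u := by
            rw [h2, mul_one]; simp only [mul_assoc]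

lemma trace_pow_eq {N : ℕ} (A : Matrix (Fin N) (Fin N) ℂ) (hA : A.IsHermitian) (k : ℕ) :
    (A ^ k).trace.re = ∑ i, (hA.eigenvalues i) ^ k := by
  set u : Matrix (Fin N) (Fin N) ℂ := (hA.eigenvectorUnitary : Matrix (Fin N) (Fin N) ℂ)
  have h1 : u * star u = 1 := (Matrix.mem_unitaryGroup_iff).mp hA.eigenvectorUnitary.2
  have h2 : star u * u = 1 := (Matrix.mem_unitaryGroup_iff').mp hA.eigenvectorUnitary.2
  have hD := hA.spectral_theorem
  rw [Unitary.conjStarAlgAut_apply] at hD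
  have : (A ^ k).trace
      = ∑ i, ((hA.eigenvalues i : ℂ)) ^ k := by
    conv_lhs => rw [hD]
    rw [conj_pow_aux u _ h1 h2 k, Matrix.trace_mul_cycle, h2, one_mul,
      Matrix.diagonal_pow, Matrix.trace_diagonal]
    simp [Function.comp]
  rw [this]
  simp [← Complex.ofReal_pow]

/-- Lower bound on the spectral gap from the frame potential: for a Hermitian PSD
moment operator `A` with eigenvalues in `[0,1]`, exactly `t!` of them equal to `1`,
and frame potential `F(m) = tr[A^{2m}]`, the spectral gap `Δ = 1 − λ₂` satisfies
`Δ ≥ 1 − (F(m) − t!)^{1/(2m)}`. -/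
theorem spectral_gap_from_frame_potential (N t m : ℕ) (hm : 1 ≤ m)
    (A : Matrix (Fin N) (Fin N) ℂ) (hA : A.IsHermitian)
    (hspec : ∀ i, hA.eigenvalues i ∈ Set.Icc (0 : ℝ) 1)
    (hcard : (Finset.univ.filter fun i => hA.eigenvalues i = 1).card = Nat.factorial t) :
    1 - ((A ^ (2 * m)).trace.re - (Nat.factorial t : ℝ)) ^ ((1 : ℝ) / (2 * m))
      ≤ 1 - lambda2 hA := by
  have htr := trace_pow_eq A hA (2 * m)
  set T : Finset (Fin N) := Finset.univ.filter fun i => hA.eigenvalues i = 1 with hT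
  have hsplit : ∑ i, (hA.eigenvalues i) ^ (2 * m)
      = (Nat.factorial t : ℝ) + ∑ i ∈ Tᶜ, (hA.eigenvalues i) ^ (2 * m) := by
    rw [← Finset.sum_add_sum_compl T]
    congr 1
    rw [← hcard, Finset.sum_congr rfl (fun i hi => by
      rw [(Finset.mem_filter.mp hi).2, one_pow])]
    simp
  set S : ℝ := ∑ i ∈ Tᶜ, (hA.eigenvalues i) ^ (2 * m) with hS
  have hSnn : 0 ≤ S :=
    Finset.sum_nonneg fun i _ => pow_nonneg (hspec i).1 _
  have hdiff : (A ^ (2 * m)).trace.re - (Nat.factorial t : ℝ) = S := by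
    rw [htr, hsplit]; ring
  rw [hdiff]
  have hNE : Nonempty (Fin N) := by
    have : T.Nonempty := Finset.card_pos.mp (by rw [hcard]; exact Nat.factorial_pos t)
    exact ⟨this.choose⟩
  have hgap : lambda2 hA ≤ S ^ ((1 : ℝ) / (2 * m)) := by
    apply ciSup_le
    intro i
    by_cases h1 : hA.eigenvalues i = 1
    · simp only [h1, if_pos]
      exact Real.rpow_nonneg hSnn _
    · simp only [h1, if_neg, if_false]
      have hx0 : (0:ℝ) ≤ hA.eigenvalues i := (hspec i).1
      have hle : (hA.eigenvalues i) ^ (2 * m) ≤ S := by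
        apply Finset.single_le_sum (fun j _ => pow_nonneg (hspec j).1 _)
        simp [hT, h1]
      have h2m : ((2 * m : ℕ) : ℝ) ≠ 0 := by positivity
      have key : hA.eigenvalues i
          = ((hA.eigenvalues i ^ (2 * m) : ℝ)) ^ ((1 : ℝ) / (2 * m)) := by
        have hm' : (m : ℝ) ≠ 0 := by positivity
        have he : ((2 * m : ℕ) : ℝ) * ((1 : ℝ) / (2 * (m : ℝ))) = 1 := by
          push_cast; field_simp
        rw [← Real.rpow_natCast (hA.eigenvalues i) (2 * m), ← Real.rpow_mul hx0, he,
          Real.rpow_one]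
      rw [key]
      exact Real.rpow_le_rpow (pow_nonneg hx0 _) hle (by positivity)
  linarith [hgap]
end

section
/- Let |ψ⟩ be a unit vector in Sym^n(C^d), and let L_{n−1} be the subspace of operators on Sym^n(C^d) of the form P_{Sym^n}(1_d ⊗ M̃)P_{Sym^n} with M̃ an operator on Sym^{n−1}(C^d). Then for every Frobenius-normalized M ∈ L_{n−1}, |⟨ψ|M|ψ⟩|² ≤ n²/d. -/
open Matrix

/-- The orthogonal projector onto the symmetric subspace `Sym^n(ℂ^d) ⊆ (ℂ^d)^{⊗n}`,
written as a matrix in the product basis (indexed by functions `Fin n → Fin d`). -/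
noncomputable def Psym (n d : ℕ) : Matrix (Fin n → Fin d) (Fin n → Fin d) ℂ :=
  fun i j => (∑ σ : Equiv.Perm (Fin n), if j = i ∘ σ then (1 : ℂ) else 0) / (Nat.factorial n : ℂ)

/-- The embedding `1_d ⊗ M̃` of an operator `M̃` on `n` tensor factors into an operator
on `n+1` tensor factors (identity on the first factor). -/
noncomputable def embedOne {n d : ℕ} (M : Matrix (Fin n → Fin d) (Fin n → Fin d) ℂ) :
    Matrix (Fin (n + 1) → Fin d) (Fin (n + 1) → Fin d) ℂ :=
  fun i j => if i 0 = j 0 then M (Fin.tail i) (Fin.tail j) else 0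

namespace SOAux

open scoped ComplexOrder

variable {k d m : ℕ}

/-- Permutation matrix. -/
noncomputable def W (d : ℕ) {m : ℕ} (σ : Equiv.Perm (Fin m)) :
    Matrix (Fin m → Fin d) (Fin m → Fin d) ℂ :=
  Matrix.of fun u v => if v = u ∘ σ then (1 : ℂ) else 0

lemma W_apply (σ : Equiv.Perm (Fin m)) (u v : Fin m → Fin d) :
    W d σ u v = if v = u ∘ σ then (1 : ℂ) else 0 := rfl

lemma W_mul (σ τ : Equiv.Perm (Fin m)) : W d σ * W d τ = W d (σ * τ) := by
  ext u v
  simp only [W, Matrix.mul_apply, of_apply, ite_mul, one_mul, zero_mul]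
  rw [Finset.sum_ite_eq' Finset.univ (u ∘ σ) (fun w => if v = w ∘ τ then (1:ℂ) else 0)]
  simp [Function.comp_assoc]
  congr

lemma W_one : W d (1 : Equiv.Perm (Fin m)) = 1 := by
  ext u v
  simp only [W, of_apply, Matrix.one_apply]
  congr 1
  simp [eq_comm]

lemma W_conjTranspose (σ : Equiv.Perm (Fin m)) : (W d σ)ᴴ = W d σ⁻¹ := by
  ext u v
  simp only [W, conjTranspose_apply, of_apply]
  rw [apply_ite star, star_one, star_zero]
  congr 1
  simp only [eq_iff_iff]
  constructor
  · rintro rfl; ext x; simp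
  · rintro rfl; ext x; simp

lemma Psym_eq (n : ℕ) : Psym n d = ((n.factorial : ℂ))⁻¹ • ∑ σ : Equiv.Perm (Fin n), W d σ := by
  ext u v
  simp [Psym, W, div_eq_inv_mul, Matrix.sum_apply]

lemma Psym_conjTranspose (n : ℕ) : (Psym n d)ᴴ = Psym n d := by
  rw [Psym_eq]
  rw [conjTranspose_smul, conjTranspose_sum]
  simp only [W_conjTranspose]
  rw [← Equiv.sum_comp (Equiv.inv (Equiv.Perm (Fin n))) (fun σ => W d σ)]
  simp [Equiv.inv]

lemma Psym_idem (n : ℕ) : Psym n d * Psym n d = Psym n d := by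
  rw [Psym_eq]
  rw [smul_mul_assoc, mul_smul_comm, Finset.sum_mul]
  have : ∀ σ : Equiv.Perm (Fin n), W d σ * (∑ τ : Equiv.Perm (Fin n), W d τ)
      = ∑ τ : Equiv.Perm (Fin n), W d τ := by
    intro σ
    rw [Finset.mul_sum]
    simp only [W_mul]
    exact Equiv.sum_comp (Equiv.mulLeft σ) (fun τ => W d τ)
  simp only [this, Finset.sum_const, Finset.card_univ, Fintype.card_perm, Fintype.card_fin]
  rw [← Nat.cast_smul_eq_nsmul ℂ, smul_smul, smul_smul]
  have h0 : ((n.factorial : ℂ)) ≠ 0 := Nat.cast_ne_zero.mpr (Nat.factorial_ne_zero n)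
  rw [mul_comm _ (n.factorial : ℂ), ← mul_assoc, mul_inv_cancel₀ h0, one_mul]


lemma embedOne_apply (X : Matrix (Fin k → Fin d) (Fin k → Fin d) ℂ) (u v : Fin (k+1) → Fin d) :
    embedOne X u v = if u 0 = v 0 then X (Fin.tail u) (Fin.tail v) else 0 := rfl

lemma embedOne_mul (X Y : Matrix (Fin k → Fin d) (Fin k → Fin d) ℂ) :
    embedOne X * embedOne Y = embedOne (X * Y) := by
  ext u v
  simp only [embedOne, Matrix.mul_apply]
  rw [← (Fin.consEquiv (fun _ : Fin (k+1) => Fin d)).sum_comp, Fintype.sum_prod_type,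
    Finset.sum_comm]
  simp only [Fin.consEquiv_apply, Fin.cons_zero, Fin.tail_cons, ite_mul, mul_ite, zero_mul,
    mul_zero]
  simp only [Fin.consEquiv, Equiv.coe_fn_mk, Fin.tail_cons]
  simp only [Finset.sum_ite_eq', Finset.mem_univ, if_true]
  by_cases h : u 0 = v 0 <;> simp [h, Finset.sum_comm]

lemma embedOne_conjTranspose (X : Matrix (Fin k → Fin d) (Fin k → Fin d) ℂ) :
    (embedOne X)ᴴ = embedOne Xᴴ := by
  ext u v
  simp only [embedOne, conjTranspose_apply]
  rw [apply_ite star, star_zero]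
  rcases eq_or_ne (u 0) (v 0) with h | h
  · simp [h]
  · simp [h, Ne.symm h]

/-- `ext e`: extension of a permutation of `Fin k` to `Fin (k+1)` fixing `0`. -/
def pext (e : Equiv.Perm (Fin k)) : Equiv.Perm (Fin (k+1)) :=
  Equiv.Perm.decomposeFin.symm (0, e)

lemma pext_zero (e : Equiv.Perm (Fin k)) : pext e 0 = 0 :=
  Equiv.Perm.decomposeFin_symm_apply_zero 0 e

lemma pext_succ (e : Equiv.Perm (Fin k)) (x : Fin k) : pext e x.succ = (e x).succ := by
  simp [pext, Equiv.Perm.decomposeFin_symm_apply_succ]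

lemma decomposeFin_symm_eq (p : Fin (k+1)) (e : Equiv.Perm (Fin k)) :
    Equiv.Perm.decomposeFin.symm (p, e) = Equiv.swap 0 p * pext e := by
  ext x
  refine Fin.cases ?_ (fun y => ?_) x
  · simp [pext, Equiv.Perm.decomposeFin_symm_apply_zero]
  · simp [pext, Equiv.Perm.decomposeFin_symm_apply_succ]

lemma comp_pext_iff (u v : Fin (k+1) → Fin d) (e : Equiv.Perm (Fin k)) :
    v = u ∘ (pext e) ↔ (v 0 = u 0 ∧ Fin.tail v = Fin.tail u ∘ e) := by
  constructor
  · rintro rfl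
    refine ⟨by simp [pext_zero], ?_⟩
    ext x
    simp [Fin.tail, pext_succ]
  · rintro ⟨h0, ht⟩
    funext x
    refine Fin.cases ?_ (fun y => ?_) x
    · simpa [pext_zero] using h0
    · have := congrFun ht y
      simpa [Fin.tail, pext_succ] using this

lemma sum_pext : (∑ e : Equiv.Perm (Fin k), W d (pext e))
    = (Nat.factorial k : ℂ) • embedOne (Psym k d) := by
  ext u v
  simp only [Matrix.sum_apply, W, of_apply, Matrix.smul_apply, embedOne, Psym, smul_eq_mul]
  have h0 : ((Nat.factorial k : ℂ)) ≠ 0 := Nat.cast_ne_zero.mpr (Nat.factorial_ne_zero k)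
  rcases eq_or_ne (u 0) (v 0) with h | h
  · rw [if_pos h]
    have : ∀ e : Equiv.Perm (Fin k),
        (if v = u ∘ (pext e) then (1:ℂ) else 0)
          = if Fin.tail v = Fin.tail u ∘ e then (1:ℂ) else 0 := by
      intro e
      congr 1
      rw [comp_pext_iff]
      simp [h.symm]
    rw [Finset.sum_congr rfl (fun e _ => this e)]
    rw [mul_div_assoc', mul_comm, mul_div_assoc, div_self h0, mul_one]
  · rw [if_neg h]
    rw [mul_zero]
    refine Finset.sum_eq_zero (fun e _ => ?_)
    rw [if_neg]
    rw [comp_pext_iff]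
    rintro ⟨h1, -⟩
    exact h h1.symm


lemma Psym_succ_decomp :
    ((k+1 : ℂ)) • Psym (k+1) d
      = ∑ p : Fin (k+1), W d (Equiv.swap 0 p) * embedOne (Psym k d) := by
  rw [Psym_eq]
  have hre : (∑ σ : Equiv.Perm (Fin (k+1)), W d σ)
      = (Nat.factorial k : ℂ) • ∑ p : Fin (k+1), W d (Equiv.swap 0 p) * embedOne (Psym k d) := by
    rw [← Equiv.sum_comp (Equiv.Perm.decomposeFin.symm) (fun σ => W d σ)]
    rw [Fintype.sum_prod_type]
    have hWe : ∀ p : Fin (k+1), ∀ e : Equiv.Perm (Fin k),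
        W d (Equiv.Perm.decomposeFin.symm (p, e)) = W d (Equiv.swap 0 p) * W d (pext e) := by
      intro p e; rw [decomposeFin_symm_eq, ← W_mul]
    simp only [hWe]
    rw [Finset.smul_sum]
    refine Finset.sum_congr rfl (fun p _ => ?_)
    rw [← Finset.mul_sum, sum_pext, mul_smul_comm]
  rw [hre, smul_smul, smul_smul]
  congr 1
  rw [Nat.factorial_succ]
  have h1 : ((k:ℂ)+1) ≠ 0 := by
    have := Nat.cast_ne_zero (R := ℂ).mpr (Nat.succ_ne_zero k)
    push_cast at this
    exact this
  have h2 : ((Nat.factorial k : ℂ)) ≠ 0 := Nat.cast_ne_zero.mpr (Nat.factorial_ne_zero k)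
  push_cast
  field_simp
  rw [one_smul]

lemma Psym_succ_decomp' :
    ((k+1 : ℂ)) • Psym (k+1) d
      = ∑ p : Fin (k+1), embedOne (Psym k d) * W d (Equiv.swap 0 p) := by
  calc ((k+1:ℂ)) • Psym (k+1) d = (((k+1:ℂ)) • Psym (k+1) d)ᴴ := by
        rw [conjTranspose_smul, Psym_conjTranspose]
        congr 1
        simp
    _ = _ := by
        rw [Psym_succ_decomp, conjTranspose_sum]
        refine Finset.sum_congr rfl (fun p _ => ?_)
        rw [conjTranspose_mul, W_conjTranspose, embedOne_conjTranspose, Psym_conjTranspose,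
          Equiv.swap_inv]

lemma kne : ((k:ℂ)+1) ≠ 0 := by
  have := Nat.cast_ne_zero (R := ℂ).mpr (Nat.succ_ne_zero k)
  push_cast at this
  exact this

lemma Q_idem : embedOne (Psym k d) * embedOne (Psym k d) = embedOne (Psym k d) := by
  rw [embedOne_mul, Psym_idem]

lemma P_mul_Q : Psym (k+1) d * embedOne (Psym k d) = Psym (k+1) d := by
  have h : ((k+1:ℂ)) • (Psym (k+1) d * embedOne (Psym k d)) = ((k+1:ℂ)) • Psym (k+1) d := by
    rw [← smul_mul_assoc, Psym_succ_decomp, Finset.sum_mul]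
    refine Finset.sum_congr rfl (fun p _ => ?_)
    rw [mul_assoc, Q_idem]
  exact smul_right_injective _ kne h

lemma Q_mul_P : embedOne (Psym k d) * Psym (k+1) d = Psym (k+1) d := by
  have h : ((k+1:ℂ)) • (embedOne (Psym k d) * Psym (k+1) d) = ((k+1:ℂ)) • Psym (k+1) d := by
    rw [← mul_smul_comm, Psym_succ_decomp', Finset.mul_sum]
    refine Finset.sum_congr rfl (fun p _ => ?_)
    rw [← mul_assoc, Q_idem]
  exact smul_right_injective _ kne h

lemma W_apply' (σ : Equiv.Perm (Fin m)) (u v : Fin m → Fin d) :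
    W d σ u v = if u = v ∘ ⇑σ⁻¹ then (1 : ℂ) else 0 := by
  rw [W_apply]
  congr 1
  simp only [eq_iff_iff]
  constructor
  · rintro rfl; ext x; simp
  · rintro rfl; ext x; simp

lemma mul_W_apply (A : Matrix (Fin m → Fin d) (Fin m → Fin d) ℂ) (τ : Equiv.Perm (Fin m))
    (u x : Fin m → Fin d) : (A * W d τ) u x = A u (x ∘ ⇑τ⁻¹) := by
  calc (A * W d τ) u x = ∑ w, if w = x ∘ ⇑τ⁻¹ then A u w else 0 := by
        rw [Matrix.mul_apply]
        refine Finset.sum_congr rfl (fun w _ => ?_)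
        rw [W_apply']
        split_ifs <;> simp
    _ = A u (x ∘ ⇑τ⁻¹) := by simp
  -- note: W d τ w x = if w = x ∘ τ⁻¹ ...

lemma W_mul_apply (A : Matrix (Fin m → Fin d) (Fin m → Fin d) ℂ) (σ : Equiv.Perm (Fin m))
    (u x : Fin m → Fin d) : (W d σ * A) u x = A (u ∘ ⇑σ) x := by
  calc (W d σ * A) u x = ∑ w, if w = u ∘ ⇑σ then A w x else 0 := by
        rw [Matrix.mul_apply]
        refine Finset.sum_congr rfl (fun w _ => ?_)
        rw [W_apply, ite_mul, one_mul, zero_mul]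
    _ = A (u ∘ ⇑σ) x := by simp

lemma trace_WW (X Y : Matrix (Fin m → Fin d) (Fin m → Fin d) ℂ) (σ τ : Equiv.Perm (Fin m)) :
    (Xᴴ * W d σ * Y * W d τ).trace
      = ∑ u, ∑ v, star (X v u) * Y (v ∘ ⇑σ) (u ∘ ⇑τ⁻¹) := by
  rw [Matrix.trace]
  refine Finset.sum_congr rfl (fun u _ => ?_)
  rw [Matrix.diag_apply, mul_W_apply, mul_assoc Xᴴ (W d σ) Y, Matrix.mul_apply]
  refine Finset.sum_congr rfl (fun v _ => ?_)
  rw [W_mul_apply, conjTranspose_apply]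

lemma comp_swap_zero (u : Fin (k+1) → Fin d) (q : Fin (k+1)) :
    (u ∘ ⇑(Equiv.swap 0 q)) 0 = u q := by
  simp [Equiv.swap_apply_left]

lemma tail_comp_swap (u : Fin (k+1) → Fin d) (q : Fin k) :
    Fin.tail (u ∘ ⇑(Equiv.swap 0 q.succ)) = Function.update (Fin.tail u) q (u 0) := by
  funext x
  rw [Function.update_apply]
  by_cases h : x = q
  · subst h
    simp [Fin.tail, Equiv.swap_apply_right]
  · have h2 : (x.succ : Fin (k+1)) ≠ q.succ := by simpa [Fin.succ_inj] using h
    simp [Fin.tail, Equiv.swap_apply_of_ne_of_ne (Fin.succ_ne_zero x) h2, h]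

lemma caseA_nonneg (C : Matrix (Fin k → Fin d) (Fin k → Fin d) ℂ) :
    0 ≤ ∑ u : Fin (k+1) → Fin d, ∑ v : Fin (k+1) → Fin d,
      star (embedOne C v u) * embedOne C v u := by
  refine Finset.sum_nonneg fun u _ => Finset.sum_nonneg fun v _ => star_mul_self_nonneg _

lemma caseB_nonneg (C : Matrix (Fin k → Fin d) (Fin k → Fin d) ℂ) (q : Fin k) :
    0 ≤ ∑ u : Fin (k+1) → Fin d, ∑ v : Fin (k+1) → Fin d,
      star (embedOne C v u) * embedOne C v (u ∘ ⇑(Equiv.swap 0 q.succ)) := by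
  refine Finset.sum_nonneg fun u _ => Finset.sum_nonneg fun v _ => ?_
  rw [embedOne_apply, embedOne_apply, comp_swap_zero, tail_comp_swap]
  by_cases h1 : v 0 = u 0
  · by_cases h2 : v 0 = u q.succ
    · rw [if_pos h1, if_pos h2]
      have hq : u 0 = Fin.tail u q := by
        rw [show Fin.tail u q = u q.succ from rfl, ← h2, h1]
      rw [hq, Function.update_eq_self]
      exact star_mul_self_nonneg _
    · rw [if_neg h2, mul_zero]
  · rw [if_neg h1, star_zero, zero_mul]

lemma caseC_nonneg (C : Matrix (Fin k → Fin d) (Fin k → Fin d) ℂ) (p : Fin k) :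
    0 ≤ ∑ u : Fin (k+1) → Fin d, ∑ v : Fin (k+1) → Fin d,
      star (embedOne C v u) * embedOne C (v ∘ ⇑(Equiv.swap 0 p.succ)) u := by
  refine Finset.sum_nonneg fun u _ => Finset.sum_nonneg fun v _ => ?_
  rw [embedOne_apply, embedOne_apply, comp_swap_zero, tail_comp_swap]
  by_cases h1 : v 0 = u 0
  · by_cases h2 : v p.succ = u 0
    · rw [if_pos h1, if_pos h2]
      have hp : v 0 = Fin.tail v p := by
        rw [show Fin.tail v p = v p.succ from rfl, h2, h1]
      rw [hp, Function.update_eq_self]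
      exact star_mul_self_nonneg _
    · rw [if_neg h2, mul_zero]
  · rw [if_neg h1, star_zero, zero_mul]

lemma splitAt_self (p : Fin k) (a : Fin d) (Y : {j // j ≠ p} → Fin d) :
    (Equiv.funSplitAt p (Fin d)).symm (a, Y) p = a := by
  simp [Equiv.funSplitAt, Equiv.piSplitAt]

lemma update_splitAt (p : Fin k) (a b : Fin d) (Y : {j // j ≠ p} → Fin d) :
    Function.update ((Equiv.funSplitAt p (Fin d)).symm (b, Y)) p a
      = (Equiv.funSplitAt p (Fin d)).symm (a, Y) := by
  funext j
  rw [Function.update_apply]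
  by_cases h : j = p
  · subst h; simp [Equiv.funSplitAt, Equiv.piSplitAt]
  · simp [Equiv.funSplitAt, Equiv.piSplitAt, h]

lemma regroup_nonneg {α β γ : Type*} [Fintype α] [Fintype β] [Fintype γ]
    (f : α → β → γ → ℂ) : 0 ≤ ∑ a : α, ∑ c : α, ∑ X : β, ∑ Y : γ, star (f c X Y) * f a X Y := by
  have key : (∑ a : α, ∑ c : α, ∑ X : β, ∑ Y : γ, star (f c X Y) * f a X Y)
      = ∑ X : β, ∑ Y : γ, star (∑ c, f c X Y) * (∑ a, f a X Y) := by
    simp only [star_sum, Finset.sum_mul, Finset.mul_sum]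
    calc (∑ a : α, ∑ c : α, ∑ X : β, ∑ Y : γ, star (f c X Y) * f a X Y)
        = ∑ c : α, ∑ a : α, ∑ X : β, ∑ Y : γ, star (f c X Y) * f a X Y := Finset.sum_comm
      _ = ∑ c : α, ∑ X : β, ∑ a : α, ∑ Y : γ, star (f c X Y) * f a X Y :=
          Finset.sum_congr rfl fun c _ => Finset.sum_comm
      _ = ∑ c : α, ∑ X : β, ∑ Y : γ, ∑ a : α, star (f c X Y) * f a X Y :=
          Finset.sum_congr rfl fun c _ => Finset.sum_congr rfl fun X _ => Finset.sum_comm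
      _ = ∑ X : β, ∑ c : α, ∑ Y : γ, ∑ a : α, star (f c X Y) * f a X Y := Finset.sum_comm
      _ = ∑ X : β, ∑ Y : γ, ∑ c : α, ∑ a : α, star (f c X Y) * f a X Y :=
          Finset.sum_congr rfl fun X _ => Finset.sum_comm
      _ = ∑ X : β, ∑ Y : γ, ∑ a : α, ∑ c : α, star (f c X Y) * f a X Y :=
          Finset.sum_congr rfl fun X _ => Finset.sum_congr rfl fun Y _ => Finset.sum_comm
  rw [key]
  exact Finset.sum_nonneg fun X _ => Finset.sum_nonneg fun Y _ => star_mul_self_nonneg _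

lemma caseD_nonneg (C : Matrix (Fin k → Fin d) (Fin k → Fin d) ℂ) (p q : Fin k) :
    0 ≤ ∑ u : Fin (k+1) → Fin d, ∑ v : Fin (k+1) → Fin d,
      star (embedOne C v u) * embedOne C (v ∘ ⇑(Equiv.swap 0 p.succ)) (u ∘ ⇑(Equiv.swap 0 q.succ)) := by
  have step1 : (∑ u : Fin (k+1) → Fin d, ∑ v : Fin (k+1) → Fin d,
      star (embedOne C v u) * embedOne C (v ∘ ⇑(Equiv.swap 0 p.succ)) (u ∘ ⇑(Equiv.swap 0 q.succ)))
      = ∑ a : Fin d, ∑ x : Fin k → Fin d, ∑ b : Fin d, ∑ y : Fin k → Fin d,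
        (if b = a then star (C y x) else 0) *
        (if y p = x q then C (Function.update y p b) (Function.update x q a) else 0) := by
    rw [← Equiv.sum_comp (Fin.consEquiv fun _ : Fin (k+1) => Fin d), Fintype.sum_prod_type]
    refine Finset.sum_congr rfl fun a _ => Finset.sum_congr rfl fun x _ => ?_
    rw [← Equiv.sum_comp (Fin.consEquiv fun _ : Fin (k+1) => Fin d), Fintype.sum_prod_type]
    refine Finset.sum_congr rfl fun b _ => Finset.sum_congr rfl fun y _ => ?_
    rw [embedOne_apply, embedOne_apply, comp_swap_zero, comp_swap_zero, tail_comp_swap,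
      tail_comp_swap, apply_ite star, star_zero]
    simp [Fin.consEquiv, Fin.tail_cons]
  have step2 : (∑ a : Fin d, ∑ x : Fin k → Fin d, ∑ b : Fin d, ∑ y : Fin k → Fin d,
        (if b = a then star (C y x) else 0) *
        (if y p = x q then C (Function.update y p b) (Function.update x q a) else 0))
      = ∑ a : Fin d, ∑ x : Fin k → Fin d, ∑ y : Fin k → Fin d,
        star (C y x) *
        (if y p = x q then C (Function.update y p a) (Function.update x q a) else 0) := by
    refine Finset.sum_congr rfl fun a _ => Finset.sum_congr rfl fun x _ => ?_
    rw [Finset.sum_comm]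
    refine Finset.sum_congr rfl fun y _ => ?_
    simp only [ite_mul, zero_mul]
    rw [Finset.sum_ite_eq' Finset.univ a (fun b => star (C y x) *
      (if y p = x q then C (Function.update y p b) (Function.update x q a) else 0))]
    simp
  have step3 : (∑ a : Fin d, ∑ x : Fin k → Fin d, ∑ y : Fin k → Fin d,
        star (C y x) *
        (if y p = x q then C (Function.update y p a) (Function.update x q a) else 0))
      = ∑ a : Fin d, ∑ c : Fin d, ∑ X : {j // j ≠ q} → Fin d, ∑ Y : {j // j ≠ p} → Fin d,
        star (C ((Equiv.funSplitAt p (Fin d)).symm (c, Y)) ((Equiv.funSplitAt q (Fin d)).symm (c, X))) *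
          C ((Equiv.funSplitAt p (Fin d)).symm (a, Y)) ((Equiv.funSplitAt q (Fin d)).symm (a, X)) := by
    refine Finset.sum_congr rfl fun a _ => ?_
    rw [← Equiv.sum_comp (Equiv.funSplitAt q (Fin d)).symm, Fintype.sum_prod_type]
    refine Finset.sum_congr rfl fun c _ => Finset.sum_congr rfl fun X _ => ?_
    rw [← Equiv.sum_comp (Equiv.funSplitAt p (Fin d)).symm, Fintype.sum_prod_type, Finset.sum_comm]
    refine Finset.sum_congr rfl fun Y _ => ?_
    simp only [splitAt_self, update_splitAt, mul_ite, mul_zero]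
    rw [Finset.sum_ite_eq' Finset.univ c (fun e =>
      star (C ((Equiv.funSplitAt p (Fin d)).symm (e, Y)) ((Equiv.funSplitAt q (Fin d)).symm (c, X))) *
        C ((Equiv.funSplitAt p (Fin d)).symm (a, Y)) ((Equiv.funSplitAt q (Fin d)).symm (a, X)))]
    simp
  rw [step1, step2, step3]
  exact regroup_nonneg (fun a X Y =>
    C ((Equiv.funSplitAt p (Fin d)).symm (a, Y)) ((Equiv.funSplitAt q (Fin d)).symm (a, X)))

lemma tpq_nonneg (C : Matrix (Fin k → Fin d) (Fin k → Fin d) ℂ) (p q : Fin (k+1)) :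
    0 ≤ ((embedOne C)ᴴ * W d (Equiv.swap 0 p) * embedOne C * W d (Equiv.swap 0 q)).trace := by
  rw [trace_WW]
  have hinv : ∀ r : Fin (k+1), (Equiv.swap (0 : Fin (k+1)) r)⁻¹ = Equiv.swap 0 r := fun r =>
    Equiv.swap_inv 0 r
  rw [Finset.sum_congr rfl (fun u _ => Finset.sum_congr rfl (fun v _ => by rw [hinv]))]
  rcases Fin.eq_zero_or_eq_succ p with rfl | ⟨p', rfl⟩
  · rcases Fin.eq_zero_or_eq_succ q with rfl | ⟨q', rfl⟩
    · simpa [Equiv.swap_self] using caseA_nonneg C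
    · simpa [Equiv.swap_self] using caseB_nonneg C q'
  · rcases Fin.eq_zero_or_eq_succ q with rfl | ⟨q', rfl⟩
    · simpa [Equiv.swap_self] using caseC_nonneg C p'
    · exact caseD_nonneg C p' q'

lemma t00_eq (C : Matrix (Fin k → Fin d) (Fin k → Fin d) ℂ) :
    ((embedOne C)ᴴ * embedOne C).trace
      = (d:ℂ) * ∑ y : Fin k → Fin d, ∑ x : Fin k → Fin d, star (C y x) * C y x := by
  have h : (embedOne C)ᴴ * embedOne C
      = (embedOne C)ᴴ * W d (1 : Equiv.Perm (Fin (k+1))) * embedOne C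
          * W d (1 : Equiv.Perm (Fin (k+1))) := by
    rw [W_one, mul_one, mul_one]
  rw [h, trace_WW]
  have hcomp : ∀ w : Fin (k+1) → Fin d, w ∘ ⇑(1 : Equiv.Perm (Fin (k+1))) = w := by
    intro w; ext z; simp
  simp only [inv_one, hcomp]
  rw [← Equiv.sum_comp (Fin.consEquiv fun _ : Fin (k+1) => Fin d), Fintype.sum_prod_type]
  have hstep : ∀ a : Fin d, ∀ x : Fin k → Fin d,
      (∑ v : Fin (k+1) → Fin d,
        star (embedOne C v ((Fin.consEquiv fun _ : Fin (k+1) => Fin d) (a, x)))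
          * embedOne C v ((Fin.consEquiv fun _ : Fin (k+1) => Fin d) (a, x)))
      = ∑ y : Fin k → Fin d, star (C y x) * C y x := by
    intro a x
    rw [← Equiv.sum_comp (Fin.consEquiv fun _ : Fin (k+1) => Fin d), Fintype.sum_prod_type]
    have : ∀ b : Fin d, ∀ y : Fin k → Fin d,
        star (embedOne C ((Fin.consEquiv fun _ : Fin (k+1) => Fin d) (b, y))
            ((Fin.consEquiv fun _ : Fin (k+1) => Fin d) (a, x)))
          * embedOne C ((Fin.consEquiv fun _ : Fin (k+1) => Fin d) (b, y))
            ((Fin.consEquiv fun _ : Fin (k+1) => Fin d) (a, x))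
        = if b = a then star (C y x) * C y x else 0 := by
      intro b y
      rw [embedOne_apply]
      simp only [Fin.consEquiv, Equiv.coe_fn_mk, Fin.cons_zero, Fin.tail_cons]
      split_ifs <;> simp
    simp only [this]
    rw [Finset.sum_comm]
    refine Finset.sum_congr rfl fun y _ => ?_
    rw [Finset.sum_ite_eq' Finset.univ a (fun b => star (C y x) * C y x)]
    simp
  simp only [hstep]
  rw [Finset.sum_const, Finset.card_univ, Fintype.card_fin, Finset.mul_sum]
  rw [nsmul_eq_mul, Finset.mul_sum]
  simp only [← Finset.mul_sum]
  congr 1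
  exact Finset.sum_comm

lemma cs_complex {ι : Type*} [Fintype ι] (f g : ι → ℂ) :
    ‖∑ i, f i * g i‖ ^ 2
      ≤ (∑ i, ‖f i‖ ^ 2) * (∑ i, ‖g i‖ ^ 2) := by
  have h1 : ‖∑ i, f i * g i‖ ≤ ∑ i, ‖f i‖ * ‖g i‖ := by
    refine (norm_sum_le _ _).trans
      (le_of_eq (Finset.sum_congr rfl fun i _ => norm_mul (f i) (g i)))
  have h2 : ‖∑ i, f i * g i‖ ^ 2
      ≤ (∑ i, ‖f i‖ * ‖g i‖) ^ 2 := by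
    have := norm_nonneg (∑ i, f i * g i)
    nlinarith [Finset.sum_nonneg (fun i (_ : i ∈ Finset.univ) =>
      mul_nonneg (norm_nonneg (f i)) (norm_nonneg (g i)))]
  exact h2.trans (Finset.sum_mul_sq_le_sq_mul_sq Finset.univ _ _)

lemma overlap_eq (C : Matrix (Fin k → Fin d) (Fin k → Fin d) ℂ) (ψ : (Fin (k+1) → Fin d) → ℂ) :
    dotProduct (star ψ) ((embedOne C).mulVec ψ)
      = ∑ x : Fin k → Fin d, ∑ y : Fin k → Fin d, C x y *
          (∑ a : Fin d, star (ψ (Fin.cons a x)) * ψ (Fin.cons a y)) := by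
  simp only [dotProduct, Matrix.mulVec, Pi.star_apply]
  rw [← Equiv.sum_comp (Fin.consEquiv fun _ : Fin (k+1) => Fin d), Fintype.sum_prod_type]
  have hstep : ∀ a : Fin d, ∀ x : Fin k → Fin d,
      star (ψ ((Fin.consEquiv fun _ : Fin (k+1) => Fin d) (a, x))) *
        (∑ v, embedOne C ((Fin.consEquiv fun _ : Fin (k+1) => Fin d) (a, x)) v * ψ v)
      = ∑ y : Fin k → Fin d, star (ψ (Fin.cons a x)) * (C x y * ψ (Fin.cons a y)) := by
    intro a x
    rw [← Equiv.sum_comp (Fin.consEquiv fun _ : Fin (k+1) => Fin d), Fintype.sum_prod_type]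
    have hterm : ∀ b : Fin d, ∀ y : Fin k → Fin d,
        embedOne C ((Fin.consEquiv fun _ : Fin (k+1) => Fin d) (a, x))
            ((Fin.consEquiv fun _ : Fin (k+1) => Fin d) (b, y)) * ψ ((Fin.consEquiv fun _ : Fin (k+1) => Fin d) (b, y))
        = if a = b then C x y * ψ (Fin.cons b y) else 0 := by
      intro b y
      rw [embedOne_apply]
      simp only [Fin.consEquiv, Equiv.coe_fn_mk, Fin.cons_zero, Fin.tail_cons]
      split_ifs <;> simp
    simp only [hterm]
    simp only [Finset.mul_sum]
    rw [Finset.sum_comm]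
    refine Finset.sum_congr rfl fun y _ => ?_
    simp only [mul_ite, mul_zero]
    rw [Finset.sum_ite_eq Finset.univ a (fun b =>
      star (ψ ((Fin.consEquiv fun _ : Fin (k+1) => Fin d) (a, x))) * (C x y * ψ (Fin.cons b y)))]
    simp [Fin.consEquiv]
  simp only [hstep]
  rw [Finset.sum_comm]
  refine Finset.sum_congr rfl fun x _ => ?_
  rw [Finset.sum_comm]
  refine Finset.sum_congr rfl fun y _ => ?_
  rw [Finset.mul_sum]
  refine Finset.sum_congr rfl fun a _ => by ring

set_option maxHeartbeats 1000000 in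
lemma overlap_bound (C : Matrix (Fin k → Fin d) (Fin k → Fin d) ℂ)
    (ψ : (Fin (k+1) → Fin d) → ℂ) (hψ : ∑ i, ‖ψ i‖ ^ 2 = 1) :
    ‖dotProduct (star ψ) ((embedOne C).mulVec ψ)‖ ^ 2
      ≤ ∑ x : Fin k → Fin d, ∑ y : Fin k → Fin d, ‖C x y‖ ^ 2 := by
  rw [overlap_eq]
  have hr : ∀ x : Fin k → Fin d, (0:ℝ) ≤ ∑ a : Fin d, ‖ψ (Fin.cons a x)‖ ^ 2 :=
    fun x => Finset.sum_nonneg fun a _ => sq_nonneg _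
  have hsum1 : (∑ x : Fin k → Fin d, ∑ a : Fin d, ‖ψ (Fin.cons a x)‖ ^ 2) = 1 := by
    rw [← hψ, ← Equiv.sum_comp (Fin.consEquiv fun _ : Fin (k+1) => Fin d), Fintype.sum_prod_type]
    rw [Finset.sum_comm]
    refine Finset.sum_congr rfl fun x _ => Finset.sum_congr rfl fun a _ => by
      simp [Fin.consEquiv]
  have key : (∑ x : Fin k → Fin d, ∑ y : Fin k → Fin d, C x y *
      (∑ a : Fin d, star (ψ (Fin.cons a x)) * ψ (Fin.cons a y)))
      = ∑ z : (Fin k → Fin d) × (Fin k → Fin d), C z.1 z.2 *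
        (∑ a : Fin d, star (ψ (Fin.cons a z.1)) * ψ (Fin.cons a z.2)) := by
    rw [Fintype.sum_prod_type]
  rw [key]
  have hcs := cs_complex (fun z : (Fin k → Fin d) × (Fin k → Fin d) => C z.1 z.2)
    (fun z : (Fin k → Fin d) × (Fin k → Fin d) =>
      ∑ a : Fin d, star (ψ (Fin.cons a z.1)) * ψ (Fin.cons a z.2))
  refine le_trans hcs ?_
  have hS : (∑ z : (Fin k → Fin d) × (Fin k → Fin d),
      ‖∑ a : Fin d, star (ψ (Fin.cons a z.1)) * ψ (Fin.cons a z.2)‖ ^ 2) ≤ 1 := by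
    have hz : ∀ z : (Fin k → Fin d) × (Fin k → Fin d),
        ‖∑ a : Fin d, star (ψ (Fin.cons a z.1)) * ψ (Fin.cons a z.2)‖ ^ 2
        ≤ (∑ a : Fin d, ‖ψ (Fin.cons a z.1)‖ ^ 2) *
          (∑ a : Fin d, ‖ψ (Fin.cons a z.2)‖ ^ 2) := by
      intro z
      have hcs2 := cs_complex (fun a : Fin d => star (ψ (Fin.cons a z.1)))
        (fun a : Fin d => ψ (Fin.cons a z.2))
      refine le_trans hcs2 ?_
      apply le_of_eq
      congr 1
      refine Finset.sum_congr rfl fun a _ => ?_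
      rw [Complex.star_def, Complex.norm_conj]
    refine le_trans (Finset.sum_le_sum fun z _ => hz z) ?_
    rw [Fintype.sum_prod_type]
    apply le_of_eq
    calc (∑ x : Fin k → Fin d, ∑ y : Fin k → Fin d,
          (∑ a : Fin d, ‖ψ (Fin.cons a x)‖ ^ 2) *
          (∑ a : Fin d, ‖ψ (Fin.cons a y)‖ ^ 2))
        = (∑ x : Fin k → Fin d, ∑ a : Fin d, ‖ψ (Fin.cons a x)‖ ^ 2) *
          (∑ y : Fin k → Fin d, ∑ a : Fin d, ‖ψ (Fin.cons a y)‖ ^ 2) := by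
          rw [Finset.sum_mul_sum]
      _ = 1 := by rw [hsum1, one_mul]
  calc (∑ z : (Fin k → Fin d) × (Fin k → Fin d), ‖C z.1 z.2‖ ^ 2) *
        (∑ z : (Fin k → Fin d) × (Fin k → Fin d),
          ‖∑ a : Fin d, star (ψ (Fin.cons a z.1)) * ψ (Fin.cons a z.2)‖ ^ 2)
      ≤ (∑ z : (Fin k → Fin d) × (Fin k → Fin d), ‖C z.1 z.2‖ ^ 2) * 1 := by
        refine mul_le_mul_of_nonneg_left hS (Finset.sum_nonneg fun z _ => sq_nonneg _)
    _ = ∑ x : Fin k → Fin d, ∑ y : Fin k → Fin d, ‖C x y‖ ^ 2 := by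
        rw [mul_one, Fintype.sum_prod_type]

lemma trace_key (Mt : Matrix (Fin k → Fin d) (Fin k → Fin d) ℂ) :
    ((k:ℂ)+1)^2 * ((Psym (k+1) d * embedOne Mt * Psym (k+1) d)ᴴ *
        (Psym (k+1) d * embedOne Mt * Psym (k+1) d)).trace
      = ∑ p : Fin (k+1), ∑ q : Fin (k+1),
          ((embedOne (Psym k d * Mt * Psym k d))ᴴ * W d (Equiv.swap 0 p)
            * embedOne (Psym k d * Mt * Psym k d) * W d (Equiv.swap 0 q)).trace := by
  set P : Matrix (Fin (k+1) → Fin d) (Fin (k+1) → Fin d) ℂ := Psym (k+1) d with hPdef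
  set Q : Matrix (Fin (k+1) → Fin d) (Fin (k+1) → Fin d) ℂ := embedOne (Psym k d) with hQdef
  set A : Matrix (Fin (k+1) → Fin d) (Fin (k+1) → Fin d) ℂ := embedOne Mt with hAdef
  set B : Matrix (Fin (k+1) → Fin d) (Fin (k+1) → Fin d) ℂ :=
    embedOne (Psym k d * Mt * Psym k d) with hBdef
  set M : Matrix (Fin (k+1) → Fin d) (Fin (k+1) → Fin d) ℂ := P * A * P with hMdef
  have hPP : P * P = P := Psym_idem (k+1)
  have hPQ : P * Q = P := P_mul_Q
  have hQP : Q * P = P := Q_mul_P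
  have hQQ : Q * Q = Q := Q_idem
  have hPH : Pᴴ = P := Psym_conjTranspose (k+1)
  have hQH : Qᴴ = Q := by rw [hQdef, embedOne_conjTranspose, Psym_conjTranspose]
  have hB : B = Q * A * Q := by rw [hBdef, hQdef, hAdef, embedOne_mul, embedOne_mul]
  have hBH : Bᴴ = Q * Aᴴ * Q := by
    rw [hB]
    simp only [conjTranspose_mul, hQH]
    simp only [mul_assoc]
  have hPM : P * M = M := by rw [hMdef]; simp only [← mul_assoc]; rw [hPP]
  have hMP : M * P = M := by rw [hMdef, mul_assoc (P * A) P P, hPP]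
  have hQM : Q * M = M := by rw [hMdef]; simp only [← mul_assoc]; rw [hQP]
  have hMQ : M * Q = M := by rw [hMdef, mul_assoc (P * A) P Q, hPQ]
  have hMH : Mᴴ = P * Aᴴ * P := by
    rw [hMdef]
    simp only [conjTranspose_mul, hPH]
    simp only [mul_assoc]
  have h1 : (Mᴴ * M).trace = (Bᴴ * M).trace := by
    rw [hMH, hBH]
    calc (P * Aᴴ * P * M).trace = (P * Aᴴ * M).trace := by rw [mul_assoc (P * Aᴴ) P M, hPM]
      _ = (Aᴴ * M * P).trace := by
          rw [mul_assoc P Aᴴ M, Matrix.trace_mul_comm P (Aᴴ * M), mul_assoc Aᴴ M P]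
      _ = (Aᴴ * M).trace := by rw [mul_assoc Aᴴ M P, hMP]
      _ = (Aᴴ * (Q * M * Q)).trace := by rw [hQM, hMQ]
      _ = (Q * (Aᴴ * (Q * M))).trace := by
          rw [← Matrix.trace_mul_comm (Aᴴ * (Q * M)) Q]
          simp only [mul_assoc]
      _ = (Q * Aᴴ * Q * M).trace := by simp only [mul_assoc]
  have hQBQ : Q * B * Q = B := by
    rw [hB]
    simp only [← mul_assoc]
    rw [hQQ, mul_assoc (Q * A) Q Q, hQQ]
  have hMB : M = P * B * P := by
    rw [hB]
    simp only [← mul_assoc]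
    rw [hPQ, mul_assoc (P * A) Q P, hQP, hMdef]
  have h2 : ((k:ℂ)+1)^2 • M = ∑ p : Fin (k+1), ∑ q : Fin (k+1),
      W d (Equiv.swap 0 p) * B * W d (Equiv.swap 0 q) := by
    calc ((k:ℂ)+1)^2 • M = (((k:ℂ)+1) • P) * B * (((k:ℂ)+1) • P) := by
          rw [smul_mul_assoc, smul_mul_assoc, mul_smul_comm, smul_smul, ← hMB, sq]
      _ = (∑ p : Fin (k+1), W d (Equiv.swap 0 p) * Q) * B
            * (∑ q : Fin (k+1), Q * W d (Equiv.swap 0 q)) := by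
          rw [hPdef]
          nth_rewrite 2 [Psym_succ_decomp']
          rw [Psym_succ_decomp, ← hQdef]
      _ = ∑ p : Fin (k+1), ∑ q : Fin (k+1), W d (Equiv.swap 0 p) * B * W d (Equiv.swap 0 q) := by
          rw [Finset.sum_mul, Finset.sum_mul]
          refine Finset.sum_congr rfl fun p _ => ?_
          rw [Finset.mul_sum]
          refine Finset.sum_congr rfl fun q _ => ?_
          calc W d (Equiv.swap 0 p) * Q * B * (Q * W d (Equiv.swap 0 q))
              = W d (Equiv.swap 0 p) * (Q * B * Q * W d (Equiv.swap 0 q)) := by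
                simp only [mul_assoc]
            _ = W d (Equiv.swap 0 p) * B * W d (Equiv.swap 0 q) := by
                rw [hQBQ, mul_assoc]
  calc ((k:ℂ)+1)^2 * (Mᴴ * M).trace = ((k:ℂ)+1)^2 * (Bᴴ * M).trace := by rw [h1]
    _ = (Bᴴ * (((k:ℂ)+1)^2 • M)).trace := by
        rw [mul_smul_comm, Matrix.trace_smul, smul_eq_mul]
    _ = (Bᴴ * ∑ p : Fin (k+1), ∑ q : Fin (k+1),
          W d (Equiv.swap 0 p) * B * W d (Equiv.swap 0 q)).trace := by rw [h2]
    _ = ∑ p : Fin (k+1), ∑ q : Fin (k+1),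
          (Bᴴ * W d (Equiv.swap 0 p) * B * W d (Equiv.swap 0 q)).trace := by
        rw [Finset.mul_sum, Matrix.trace_sum]
        refine Finset.sum_congr rfl fun p _ => ?_
        rw [Finset.mul_sum, Matrix.trace_sum]
        refine Finset.sum_congr rfl fun q _ => ?_
        simp only [mul_assoc]

lemma frob_bound (hd : 0 < d) (Mt : Matrix (Fin k → Fin d) (Fin k → Fin d) ℂ)
    (htr : ((Psym (k+1) d * embedOne Mt * Psym (k+1) d)ᴴ *
        (Psym (k+1) d * embedOne Mt * Psym (k+1) d)).trace = 1) :
    (∑ y : Fin k → Fin d, ∑ x : Fin k → Fin d,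
      ‖(Psym k d * Mt * Psym k d) y x‖ ^ 2) ≤ ((k:ℝ)+1)^2 / d := by
  set C : Matrix (Fin k → Fin d) (Fin k → Fin d) ℂ := Psym k d * Mt * Psym k d with hCdef
  have hkey := trace_key (d := d) Mt
  rw [htr, mul_one] at hkey
  rw [← hCdef] at hkey
  have h00 : ((embedOne C)ᴴ * embedOne C).trace
      ≤ ∑ p : Fin (k+1), ∑ q : Fin (k+1),
          ((embedOne C)ᴴ * W d (Equiv.swap 0 p) * embedOne C * W d (Equiv.swap 0 q)).trace := by
    have heq : ((embedOne C)ᴴ * embedOne C).trace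
        = ((embedOne C)ᴴ * W d (Equiv.swap (0:Fin (k+1)) 0) * embedOne C
            * W d (Equiv.swap (0:Fin (k+1)) 0)).trace := by
      rw [Equiv.swap_self,
        show (Equiv.refl (Fin (k+1))) = (1 : Equiv.Perm (Fin (k+1))) from rfl, W_one,
        mul_one, mul_one]
    rw [heq]
    have h0 : ((embedOne C)ᴴ * W d (Equiv.swap (0:Fin (k+1)) 0) * embedOne C
            * W d (Equiv.swap (0:Fin (k+1)) 0)).trace
        ≤ ∑ q : Fin (k+1), ((embedOne C)ᴴ * W d (Equiv.swap (0:Fin (k+1)) 0) * embedOne C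
            * W d (Equiv.swap 0 q)).trace :=
      Finset.single_le_sum (f := fun q => ((embedOne C)ᴴ * W d (Equiv.swap (0:Fin (k+1)) 0)
        * embedOne C * W d (Equiv.swap 0 q)).trace)
        (fun q _ => tpq_nonneg C 0 q) (Finset.mem_univ 0)
    refine h0.trans ?_
    exact Finset.single_le_sum (f := fun p => ∑ q : Fin (k+1), ((embedOne C)ᴴ
        * W d (Equiv.swap (0:Fin (k+1)) p) * embedOne C * W d (Equiv.swap 0 q)).trace)
      (fun p _ => Finset.sum_nonneg fun q _ => tpq_nonneg C p q) (Finset.mem_univ 0)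
  rw [← hkey, t00_eq] at h00
  have hsum : (∑ y : Fin k → Fin d, ∑ x : Fin k → Fin d, star (C y x) * C y x)
      = ((∑ y : Fin k → Fin d, ∑ x : Fin k → Fin d, ‖C y x‖ ^ 2 : ℝ) : ℂ) := by
    push_cast
    refine Finset.sum_congr rfl fun y _ => Finset.sum_congr rfl fun x _ => ?_
    rw [Complex.star_def, mul_comm, Complex.mul_conj, ← Complex.sq_norm]
    push_cast
    ring
  rw [hsum] at h00
  have hreal : (d:ℝ) * (∑ y : Fin k → Fin d, ∑ x : Fin k → Fin d,
      ‖C y x‖ ^ 2) ≤ ((k:ℝ)+1)^2 := by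
    rw [show ((d:ℂ) * ((∑ y : Fin k → Fin d, ∑ x : Fin k → Fin d,
        ‖C y x‖ ^ 2 : ℝ) : ℂ))
        = (((d:ℝ) * ∑ y : Fin k → Fin d, ∑ x : Fin k → Fin d,
            ‖C y x‖ ^ 2 : ℝ) : ℂ) by push_cast; ring,
      show (((k:ℂ))+1)^2 = (((((k:ℝ))+1)^2 : ℝ) : ℂ) by push_cast; ring] at h00
    exact Complex.real_le_real.mp h00
  have hd' : (0:ℝ) < d := by exact_mod_cast hd
  rw [le_div_iff₀ hd', mul_comm]
  exact hreal

lemma PBP_eq (Mt : Matrix (Fin k → Fin d) (Fin k → Fin d) ℂ) :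
    Psym (k+1) d * embedOne (Psym k d * Mt * Psym k d) * Psym (k+1) d
      = Psym (k+1) d * embedOne Mt * Psym (k+1) d := by
  rw [show embedOne (Psym k d * Mt * Psym k d)
      = embedOne (Psym k d) * embedOne Mt * embedOne (Psym k d) by
    rw [embedOne_mul, embedOne_mul]]
  simp only [← mul_assoc]
  rw [P_mul_Q, mul_assoc (Psym (k+1) d * embedOne Mt) _ _, Q_mul_P]

end SOAux

/-- For a unit vector `ψ ∈ Sym^n(ℂ^d)` (here `n = k+1`) and any Frobenius-normalized
`M ∈ L_{n−1} = {P_{Sym^n}(1_d ⊗ M̃)P_{Sym^n}}`, we have `|⟨ψ|M|ψ⟩|² ≤ n²/d`. -/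
theorem small_overlap_with_fewer_particle_operators (k d : ℕ) (hd : 0 < d)
    (ψ : (Fin (k + 1) → Fin d) → ℂ)
    (hψsym : (Psym (k + 1) d).mulVec ψ = ψ)
    (hψnorm : ∑ i, ‖ψ i‖ ^ 2 = 1)
    (Mt : Matrix (Fin k → Fin d) (Fin k → Fin d) ℂ)
    (M : Matrix (Fin (k + 1) → Fin d) (Fin (k + 1) → Fin d) ℂ)
    (hM : M = Psym (k + 1) d * embedOne Mt * Psym (k + 1) d)
    (hMnorm : (Mᴴ * M).trace = 1) :
    ‖dotProduct (star ψ) (M.mulVec ψ)‖ ^ 2 ≤ ((k + 1 : ℝ)) ^ 2 / d := by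
  open SOAux in
  have hov : dotProduct (star ψ) (M.mulVec ψ)
      = dotProduct (star ψ) ((embedOne (Psym k d * Mt * Psym k d)).mulVec ψ) := by
    have hMB : M = Psym (k+1) d * embedOne (Psym k d * Mt * Psym k d) * Psym (k+1) d := by
      rw [hM, SOAux.PBP_eq]
    rw [hMB, ← Matrix.mulVec_mulVec, ← Matrix.mulVec_mulVec, hψsym, Matrix.dotProduct_mulVec]
    have hv : Matrix.vecMul (star ψ) (Psym (k+1) d) = star ψ := by
      have h := Matrix.star_mulVec (Psym (k+1) d) ψ
      rw [hψsym, SOAux.Psym_conjTranspose] at h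
      exact h.symm
    rw [hv]
  rw [hov]
  refine le_trans (SOAux.overlap_bound _ ψ hψnorm) ?_
  have hfb := SOAux.frob_bound hd Mt (by rw [← hM]; exact hMnorm)
  exact hfb
end

section
/- For a unit vector |ψ⟩ ∈ Sym^n(C^d), the overlap of the pure state ρ = |ψ⟩⟨ψ| with the largest irreducible component satisfies tr[ρ P_{n,n}(ρ)] ≥ 1 − n²/d, where P_{n,n} is the orthogonal projection (with respect to the Hilbert–Schmidt inner product) onto the orthogonal complement of L_{n−1} inside the space of operators on Sym^n(C^d). -/
open Matrix

namespace Aux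
variable {d m : ℕ}

noncomputable def Pm (d : ℕ) {m : ℕ} (σ : Equiv.Perm (Fin m)) :
    Matrix (Fin m → Fin d) (Fin m → Fin d) ℂ :=
  fun i j => if j = i ∘ σ then 1 else 0

lemma psym_eq (m d : ℕ) : Psym m d = ((m.factorial : ℂ))⁻¹ • ∑ σ : Equiv.Perm (Fin m), Pm d σ := by
  ext i j
  simp only [Psym, Matrix.smul_apply, Matrix.sum_apply, Pm, div_eq_inv_mul, smul_eq_mul]

lemma Pm_mul (σ τ : Equiv.Perm (Fin m)) : Pm d σ * Pm d τ = Pm d (σ * τ) := by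
  ext i j
  simp only [Matrix.mul_apply, Pm, ite_mul, one_mul, zero_mul]
  rw [Finset.sum_ite_eq' Finset.univ (i ∘ ⇑σ) (fun k => if j = k ∘ ⇑τ then (1:ℂ) else 0)]
  simp only [Finset.mem_univ, if_true]
  simp [Equiv.Perm.mul_def, Equiv.coe_trans, Function.comp_assoc, Pm]
  exact if_congr Iff.rfl rfl rfl

lemma sum_Pm_mul_left (σ : Equiv.Perm (Fin m)) :
    ∑ τ : Equiv.Perm (Fin m), Pm d (σ * τ) = ∑ τ : Equiv.Perm (Fin m), Pm d τ :=
  Fintype.sum_equiv (Equiv.mulLeft σ) _ _ (fun τ => rfl)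

lemma sum_Pm_mul_right (σ : Equiv.Perm (Fin m)) :
    ∑ τ : Equiv.Perm (Fin m), Pm d (τ * σ) = ∑ τ : Equiv.Perm (Fin m), Pm d τ :=
  Fintype.sum_equiv (Equiv.mulRight σ) _ _ (fun τ => rfl)

lemma Pm_mul_psym (σ : Equiv.Perm (Fin m)) : Pm d σ * Psym m d = Psym m d := by
  rw [psym_eq, Matrix.mul_smul, Finset.mul_sum]
  simp only [Pm_mul, sum_Pm_mul_left]

lemma psym_mul_Pm (σ : Equiv.Perm (Fin m)) : Psym m d * Pm d σ = Psym m d := by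
  rw [psym_eq, Matrix.smul_mul, Finset.sum_mul]
  simp only [Pm_mul, sum_Pm_mul_right]

lemma psym_sq : Psym m d * Psym m d = Psym m d := by
  nth_rewrite 1 [psym_eq]
  rw [Matrix.smul_mul, Finset.sum_mul]
  simp only [Pm_mul_psym, Finset.sum_const, Finset.card_univ, Fintype.card_perm,
    Fintype.card_fin]
  rw [← Nat.cast_smul_eq_nsmul ℂ, smul_smul,
    inv_mul_cancel₀ (by exact_mod_cast m.factorial_ne_zero), one_smul]

lemma psym_herm : (Psym m d)ᴴ = Psym m d := by
  ext i j
  simp only [Matrix.conjTranspose_apply, Psym, Complex.star_def, map_div₀, map_sum,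
    apply_ite (starRingEnd ℂ), _root_.map_one, _root_.map_zero, map_natCast]
  congr 1
  refine Fintype.sum_equiv (Equiv.inv (Equiv.Perm (Fin m))) _ _ (fun σ => ?_)
  have h2 : (i = j ∘ ⇑σ) ↔ (j = i ∘ ⇑(σ⁻¹)) := by
    constructor
    · rintro rfl; funext x; simp
    · rintro rfl; funext x; simp
  simp [Equiv.inv_apply, h2]

end Aux

namespace E2
variable {d k : ℕ}

/-- cons equiv -/
def consE (d k : ℕ) : (Fin d × (Fin k → Fin d)) ≃ (Fin (k+1) → Fin d) where
  toFun z := Fin.cons z.1 z.2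
  invFun f := (f 0, Fin.tail f)
  left_inv z := by simp
  right_inv f := by simp

lemma sum_cons {M : Type*} [AddCommMonoid M] (f : (Fin (k+1) → Fin d) → M) :
    ∑ i, f i = ∑ x : Fin d, ∑ u : Fin k → Fin d, f (Fin.cons x u) := by
  rw [← Equiv.sum_comp (consE d k) f, Fintype.sum_prod_type]
  rfl

lemma embedOne_apply_cons (M : Matrix (Fin k → Fin d) (Fin k → Fin d) ℂ)
    (x y : Fin d) (u v : Fin k → Fin d) :
    embedOne M (Fin.cons x u) (Fin.cons y v) = if x = y then M u v else 0 := by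
  simp [embedOne]

lemma embedOne_mul (M M' : Matrix (Fin k → Fin d) (Fin k → Fin d) ℂ) :
    embedOne M * embedOne M' = embedOne (M * M') := by
  ext i j
  rw [Matrix.mul_apply, sum_cons (fun l => embedOne M i l * embedOne M' l j)]
  simp only [embedOne, Fin.cons_zero, Fin.tail_cons, Matrix.mul_apply]
  by_cases h : i 0 = j 0
  · rw [if_pos h, Finset.sum_eq_single (i 0)]
    · simp [h]
    · intro x _ hx
      apply Finset.sum_eq_zero; intro u _
      rw [if_neg (Ne.symm hx), zero_mul]
    · intro h'; exact absurd (Finset.mem_univ _) h'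
  · rw [if_neg h]
    apply Finset.sum_eq_zero; intro x _
    apply Finset.sum_eq_zero; intro u _
    by_cases h1 : i 0 = x
    · rw [if_pos h1, if_neg (fun hh => h (h1.trans hh)), mul_zero]
    · rw [if_neg h1, zero_mul]

lemma embedOne_conjT (M : Matrix (Fin k → Fin d) (Fin k → Fin d) ℂ) :
    (embedOne M)ᴴ = embedOne Mᴴ := by
  ext i j
  simp only [Matrix.conjTranspose_apply, embedOne]
  by_cases h : i 0 = j 0
  · rw [if_pos h, if_pos h.symm]
  · rw [if_neg (fun hh => h hh.symm), if_neg h, star_zero]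

end E2

namespace E3
open Aux E2
variable {d k : ℕ}

lemma embedOne_smul (c : ℂ) (M : Matrix (Fin k → Fin d) (Fin k → Fin d) ℂ) :
    embedOne (d := d) (c • M) = c • embedOne M := by
  ext i j
  simp only [embedOne, Matrix.smul_apply, smul_eq_mul, mul_ite, mul_zero]

lemma embedOne_sum {α : Type*} (s : Finset α) (F : α → Matrix (Fin k → Fin d) (Fin k → Fin d) ℂ) :
    embedOne (d := d) (∑ a ∈ s, F a) = ∑ a ∈ s, embedOne (F a) := by
  ext i j
  simp only [embedOne, Matrix.sum_apply]
  by_cases h : i 0 = j 0 <;> simp [h]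

lemma embedOne_Pm (π : Equiv.Perm (Fin k)) :
    embedOne (d := d) (Pm d π) = Pm d (Equiv.Perm.decomposeFin.symm (0, π)) := by
  ext i j
  simp only [embedOne, Pm]
  by_cases h : i 0 = j 0
  · rw [if_pos h]
    congr 1
    rw [eq_iff_iff]
    constructor
    · intro ht
      funext x
      refine Fin.cases ?_ (fun s => ?_) x
      · simp only [Function.comp_apply, Equiv.Perm.decomposeFin_symm_apply_zero]
        exact h.symm
      · simp only [Function.comp_apply, Equiv.Perm.decomposeFin_symm_apply_succ,
          Equiv.swap_self, Equiv.refl_apply]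
        exact congrFun ht s
    · intro ht
      funext s
      have := congrFun ht s.succ
      simp only [Function.comp_apply, Equiv.Perm.decomposeFin_symm_apply_succ,
        Equiv.swap_self, Equiv.refl_apply] at this
      exact this
  · rw [if_neg h, if_neg]
    intro ht
    apply h
    have := congrFun ht 0
    simp only [Function.comp_apply, Equiv.Perm.decomposeFin_symm_apply_zero] at this
    exact this.symm

lemma decomposeFin_eq (p : Fin (k+1)) (π : Equiv.Perm (Fin k)) :
    Equiv.Perm.decomposeFin.symm (p, π)
      = Equiv.swap 0 p * Equiv.Perm.decomposeFin.symm (0, π) := by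
  apply Equiv.ext
  intro x
  refine Fin.cases ?_ (fun s => ?_) x
  · simp [Equiv.Perm.decomposeFin_symm_apply_zero]
  · simp [Equiv.Perm.decomposeFin_symm_apply_succ, Equiv.swap_self]

lemma psym_succ :
    Psym (k+1) d = ((k+1 : ℂ))⁻¹ •
      ∑ p : Fin (k+1), Pm d (Equiv.swap 0 p) * embedOne (Psym k d) := by
  have h1 : embedOne (d := d) (Psym k d)
      = ((k.factorial : ℂ))⁻¹ • ∑ π : Equiv.Perm (Fin k), Pm d (Equiv.Perm.decomposeFin.symm (0, π)) := by
    rw [psym_eq, embedOne_smul, embedOne_sum]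
    simp only [embedOne_Pm]
  rw [psym_eq]
  have h2 : ∑ σ : Equiv.Perm (Fin (k+1)), Pm d σ
      = ∑ p : Fin (k+1), ∑ π : Equiv.Perm (Fin k),
          Pm d (Equiv.swap 0 p) * Pm d (Equiv.Perm.decomposeFin.symm (0, π)) := by
    rw [← Equiv.sum_comp (Equiv.Perm.decomposeFin (n := k)).symm (fun σ => Pm d σ),
      Fintype.sum_prod_type]
    exact Finset.sum_congr rfl fun p _ => Finset.sum_congr rfl fun π _ => by
      rw [decomposeFin_eq, ← Pm_mul]
  rw [h2]
  simp only [h1, Matrix.mul_smul, Finset.mul_sum, ← Finset.smul_sum, smul_smul]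
  congr 1
  rw [Nat.factorial_succ, Nat.cast_mul, mul_inv]
  push_cast
  ring

end E3

namespace E4
open Aux E2
variable {d k : ℕ}

def splitE (d : ℕ) {k : ℕ} (P : Fin k) :
    (Fin d × ({i : Fin k // i ≠ P} → Fin d)) ≃ (Fin k → Fin d) where
  toFun z i := if h : i = P then z.1 else z.2 ⟨i, h⟩
  invFun u := (u P, fun i => u i.1)
  left_inv z := by
    refine Prod.ext ?_ ?_
    · simp
    · funext i
      simp [i.2]
  right_inv u := by
    funext i
    by_cases h : i = P
    · subst h; simp
    · simp [h]

lemma splitE_apply_self (P : Fin k) (x : Fin d) (w : {i : Fin k // i ≠ P} → Fin d) :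
    splitE d P (x, w) P = x := dif_pos rfl

lemma update_splitE (P : Fin k) (x y : Fin d) (w : {i : Fin k // i ≠ P} → Fin d) :
    Function.update (splitE d P (x, w)) P y = splitE d P (y, w) := by
  funext i
  by_cases h : i = P
  · subst h; simp [splitE_apply_self, Function.update_self]
  · simp [Function.update_of_ne h, splitE, h]

lemma sum_split (P : Fin k) (f : (Fin k → Fin d) → ℂ) :
    ∑ u, f u = ∑ x : Fin d, ∑ w : {i : Fin k // i ≠ P} → Fin d, f (splitE d P (x, w)) := by
  rw [← Equiv.sum_comp (splitE d P) f, Fintype.sum_prod_type]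

lemma cons_comp_swap_zero (x : Fin d) (u : Fin k → Fin d) :
    (Fin.cons x u : Fin (k+1) → Fin d) ∘ ⇑(Equiv.swap (0 : Fin (k+1)) 0) = Fin.cons x u := by
  rw [Equiv.swap_self]
  rfl

lemma cons_comp_swap_succ (x : Fin d) (u : Fin k → Fin d) (P : Fin k) :
    (Fin.cons x u : Fin (k+1) → Fin d) ∘ ⇑(Equiv.swap 0 P.succ)
      = Fin.cons (u P) (Function.update u P x) := by
  funext z
  refine Fin.cases ?_ (fun s => ?_) z
  · simp [Equiv.swap_apply_left]
  · by_cases hs : s = P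
    · subst hs
      simp [Equiv.swap_apply_right]
    · have h1 : (s.succ : Fin (k+1)) ≠ 0 := Fin.succ_ne_zero s
      have h2 : (s.succ : Fin (k+1)) ≠ P.succ := by simpa [Fin.succ_inj] using hs
      simp [Equiv.swap_apply_of_ne_of_ne h1 h2, Function.update_of_ne hs]

lemma trace_master (A B : Matrix (Fin (k+1) → Fin d) (Fin (k+1) → Fin d) ℂ)
    (p q : Fin (k+1)) :
    (Aᴴ * Pm d (Equiv.swap 0 p) * (B * Pm d (Equiv.swap 0 q))).trace
      = ∑ a, ∑ b, star (A (b ∘ ⇑(Equiv.swap 0 p)) a) * B b (a ∘ ⇑(Equiv.swap 0 q)) := by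
  have hmul : ∀ (X : Matrix (Fin (k+1) → Fin d) (Fin (k+1) → Fin d) ℂ) (σ : Equiv.Perm (Fin (k+1)))
      (hσ : σ⁻¹ = σ) (i j : Fin (k+1) → Fin d), (X * Pm d σ) i j = X i (j ∘ ⇑σ) := by
    intro X σ hσ i j
    rw [Matrix.mul_apply]
    have hid : ∀ z, σ (σ z) = z := by
      intro z
      have h2 : σ⁻¹ (σ z) = z := σ.symm_apply_apply z
      rw [hσ] at h2
      exact h2
    have hcond : ∀ c, (j = c ∘ ⇑σ) ↔ (c = j ∘ ⇑σ) := by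
      intro c
      constructor
      · rintro rfl; funext z; simp [Function.comp_apply, hid]
      · rintro rfl; funext z; simp [Function.comp_apply, hid]
    simp only [Pm, hcond, mul_ite, mul_one, mul_zero]
    rw [Finset.sum_ite_eq' Finset.univ (j ∘ ⇑σ) (fun c => X i c)]
    simp
  have e1 : Aᴴ * Pm d (Equiv.swap 0 p)
      = Matrix.of (fun a c => star (A (c ∘ ⇑(Equiv.swap 0 p)) a)) := by
    ext a c
    rw [hmul _ _ (Equiv.swap_inv _ _), Matrix.conjTranspose_apply]
    rfl
  have e2 : B * Pm d (Equiv.swap 0 q)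
      = Matrix.of (fun b c => B b (c ∘ ⇑(Equiv.swap 0 q))) := by
    ext b c
    rw [hmul _ _ (Equiv.swap_inv _ _)]
    rfl
  rw [e1, e2, Matrix.trace]
  simp only [Matrix.diag, Matrix.mul_apply, Matrix.of_apply]

end E4

namespace E5
open Aux E2 E4
variable {d k : ℕ}

lemma trace_master_cons (A B : Matrix (Fin (k+1) → Fin d) (Fin (k+1) → Fin d) ℂ)
    (p q : Fin (k+1)) :
    (Aᴴ * Pm d (Equiv.swap 0 p) * (B * Pm d (Equiv.swap 0 q))).trace
      = ∑ y : Fin d, ∑ v : Fin k → Fin d, ∑ x : Fin d, ∑ u : Fin k → Fin d,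
          star (A ((Fin.cons x u) ∘ ⇑(Equiv.swap 0 p)) (Fin.cons y v))
            * B (Fin.cons x u) ((Fin.cons y v) ∘ ⇑(Equiv.swap 0 q)) := by
  rw [trace_master, sum_cons]
  refine Finset.sum_congr rfl fun y _ => Finset.sum_congr rfl fun v _ => ?_
  rw [sum_cons]

noncomputable def CN (N : Matrix (Fin k → Fin d) (Fin k → Fin d) ℂ) : ℂ :=
  ∑ u, ∑ v, star (N u v) * N u v

lemma T00 (N : Matrix (Fin k → Fin d) (Fin k → Fin d) ℂ) :
    ((embedOne N)ᴴ * Pm d (Equiv.swap 0 0) * (embedOne N * Pm d (Equiv.swap 0 0))).trace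
      = (d : ℂ) * CN N := by
  rw [trace_master_cons]
  simp only [cons_comp_swap_zero, embedOne_apply_cons]
  have inner : ∀ y : Fin d, ∀ v u : Fin k → Fin d,
      (∑ x : Fin d, star (if x = y then N u v else 0) * (if x = y then N u v else 0))
        = star (N u v) * N u v := by
    intro y v u
    rw [Finset.sum_eq_single y]
    · simp
    · intro x _ hx; simp [hx]
    · intro h; exact absurd (Finset.mem_univ _) h
  have step : ∀ y : Fin d, ∀ v : Fin k → Fin d,
      (∑ x : Fin d, ∑ u : Fin k → Fin d,
        star (if x = y then N u v else 0) * (if x = y then N u v else 0))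
      = ∑ u, star (N u v) * N u v := by
    intro y v
    rw [Finset.sum_comm]
    exact Finset.sum_congr rfl fun u _ => inner y v u
  simp only [step]
  rw [Finset.sum_const, Finset.card_univ, Fintype.card_fin, nsmul_eq_mul, CN,
    Finset.sum_comm]

lemma Tsucc0 (N : Matrix (Fin k → Fin d) (Fin k → Fin d) ℂ) (P : Fin k) :
    ((embedOne N)ᴴ * Pm d (Equiv.swap 0 P.succ) * (embedOne N * Pm d (Equiv.swap 0 0))).trace
      = CN N := by
  rw [trace_master_cons]
  simp only [cons_comp_swap_zero, cons_comp_swap_succ, embedOne_apply_cons]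
  -- summand: star (if u P = y then N (update u P x) v else 0) * (if x = y then N u v else 0)
  have inner : ∀ v u : Fin k → Fin d, ∀ x : Fin d,
      (∑ y : Fin d, star (if u P = y then N (Function.update u P x) v else 0)
          * (if x = y then N u v else 0))
        = if u P = x then star (N u v) * N u v else 0 := by
    intro v u x
    rw [Finset.sum_eq_single x]
    · by_cases h : u P = x
      · rw [if_pos h, if_pos rfl, if_pos h]
        rw [← h, Function.update_eq_self]
      · simp [h]
    · intro y _ hy; simp [Ne.symm hy]
    · intro h; exact absurd (Finset.mem_univ _) h
  rw [Finset.sum_comm]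
  -- now ∑ v ∑ y ∑ x ∑ u   (was ∑ y ∑ v ∑ x ∑ u)
  have step : ∀ v : Fin k → Fin d,
      (∑ y : Fin d, ∑ x : Fin d, ∑ u : Fin k → Fin d,
        star (if u P = y then N (Function.update u P x) v else 0)
          * (if x = y then N u v else 0))
      = ∑ u, star (N u v) * N u v := by
    intro v
    rw [Finset.sum_comm]
    -- ∑ x ∑ y ∑ u
    have hx : ∀ x : Fin d,
        (∑ y : Fin d, ∑ u : Fin k → Fin d,
          star (if u P = y then N (Function.update u P x) v else 0)
            * (if x = y then N u v else 0))
        = ∑ u, if u P = x then star (N u v) * N u v else 0 := by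
      intro x
      rw [Finset.sum_comm]
      exact Finset.sum_congr rfl fun u _ => inner v u x
    simp only [hx]
    rw [Finset.sum_comm]
    refine Finset.sum_congr rfl fun u _ => ?_
    rw [Finset.sum_ite_eq Finset.univ (u P) (fun _ => star (N u v) * N u v)]
    simp
  simp only [step]
  rw [CN, Finset.sum_comm]

lemma T0succ (N : Matrix (Fin k → Fin d) (Fin k → Fin d) ℂ) (Q : Fin k) :
    ((embedOne N)ᴴ * Pm d (Equiv.swap 0 0) * (embedOne N * Pm d (Equiv.swap 0 Q.succ))).trace
      = CN N := by
  rw [trace_master_cons]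
  simp only [cons_comp_swap_zero, cons_comp_swap_succ, embedOne_apply_cons]
  -- summand: star (if x = y then N u v else 0) * (if x = v Q then N u (update v Q y) else 0)
  have inner : ∀ v u : Fin k → Fin d, ∀ y : Fin d,
      (∑ x : Fin d, star (if x = y then N u v else 0)
          * (if x = v Q then N u (Function.update v Q y) else 0))
        = if v Q = y then star (N u v) * N u v else 0 := by
    intro v u y
    rw [Finset.sum_eq_single y]
    · by_cases h : v Q = y
      · rw [if_pos rfl, if_pos h.symm, if_pos h]
        rw [← h, Function.update_eq_self]
      · rw [if_neg (show ¬ y = v Q from fun hh => h hh.symm), mul_zero, if_neg h]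
    · intro x _ hx; simp [hx]
    · intro h; exact absurd (Finset.mem_univ _) h
  have step : ∀ y : Fin d, ∀ v : Fin k → Fin d,
      (∑ x : Fin d, ∑ u : Fin k → Fin d,
        star (if x = y then N u v else 0)
          * (if x = v Q then N u (Function.update v Q y) else 0))
      = ∑ u, if v Q = y then star (N u v) * N u v else 0 := by
    intro y v
    rw [Finset.sum_comm]
    exact Finset.sum_congr rfl fun u _ => inner v u y
  simp only [step]
  rw [Finset.sum_comm]
  have fin : ∀ v : Fin k → Fin d,
      (∑ y : Fin d, ∑ u : Fin k → Fin d, if v Q = y then star (N u v) * N u v else 0)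
        = ∑ u, star (N u v) * N u v := by
    intro v
    rw [Finset.sum_comm]
    refine Finset.sum_congr rfl fun u _ => ?_
    rw [Finset.sum_ite_eq Finset.univ (v Q) (fun _ => star (N u v) * N u v)]
    simp
  simp only [fin]
  rw [CN, Finset.sum_comm]

lemma Tsuccsucc (N : Matrix (Fin k → Fin d) (Fin k → Fin d) ℂ) (P Q : Fin k) :
    ((embedOne N)ᴴ * Pm d (Equiv.swap 0 P.succ) * (embedOne N * Pm d (Equiv.swap 0 Q.succ))).trace
      = ∑ z : {i : Fin k // i ≠ Q} → Fin d, ∑ w : {i : Fin k // i ≠ P} → Fin d,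
          star (∑ x : Fin d, N (splitE d P (x, w)) (splitE d Q (x, z)))
            * (∑ x : Fin d, N (splitE d P (x, w)) (splitE d Q (x, z))) := by
  set G : ({i : Fin k // i ≠ P} → Fin d) → ({i : Fin k // i ≠ Q} → Fin d) → ℂ :=
    fun w z => ∑ x : Fin d, N (splitE d P (x, w)) (splitE d Q (x, z)) with hG
  rw [trace_master_cons]
  simp only [cons_comp_swap_succ, embedOne_apply_cons]
  -- now : ∑ y ∑ v ∑ x ∑ u, star (if u P = y then N (update u P x) v else 0)
  --          * (if x = v Q then N u (update v Q y) else 0)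
  have h1 : ∀ (y : Fin d) (v : Fin k → Fin d) (x : Fin d),
      (∑ u : Fin k → Fin d, star (if u P = y then N (Function.update u P x) v else 0)
          * (if x = v Q then N u (Function.update v Q y) else 0))
      = ∑ s : Fin d, ∑ w : {i : Fin k // i ≠ P} → Fin d,
          star (if s = y then N (splitE d P (x, w)) v else 0)
            * (if x = v Q then N (splitE d P (s, w)) (Function.update v Q y) else 0) := by
    intro y v x
    rw [sum_split P]
    refine Finset.sum_congr rfl fun s _ => Finset.sum_congr rfl fun w _ => ?_
    rw [splitE_apply_self, update_splitE]
  simp only [h1]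
  -- eliminate s = y
  have h2 : ∀ (y : Fin d) (v : Fin k → Fin d) (x : Fin d)
      (w : {i : Fin k // i ≠ P} → Fin d),
      (∑ s : Fin d, star (if s = y then N (splitE d P (x, w)) v else 0)
          * (if x = v Q then N (splitE d P (s, w)) (Function.update v Q y) else 0))
      = star (N (splitE d P (x, w)) v)
          * (if x = v Q then N (splitE d P (y, w)) (Function.update v Q y) else 0) := by
    intro y v x w
    rw [Finset.sum_eq_single y]
    · rw [if_pos rfl]
    · intro s _ hs; simp [hs]
    · intro h; exact absurd (Finset.mem_univ _) h
  have h2' : ∀ (y : Fin d) (v : Fin k → Fin d) (x : Fin d),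
      (∑ s : Fin d, ∑ w : {i : Fin k // i ≠ P} → Fin d,
          star (if s = y then N (splitE d P (x, w)) v else 0)
            * (if x = v Q then N (splitE d P (s, w)) (Function.update v Q y) else 0))
      = ∑ w : {i : Fin k // i ≠ P} → Fin d,
          star (N (splitE d P (x, w)) v)
            * (if x = v Q then N (splitE d P (y, w)) (Function.update v Q y) else 0) := by
    intro y v x
    rw [Finset.sum_comm]
    exact Finset.sum_congr rfl fun w _ => h2 y v x w
  simp only [h2']
  -- split v
  have h3 : ∀ y : Fin d,
      (∑ v : Fin k → Fin d, ∑ x : Fin d, ∑ w : {i : Fin k // i ≠ P} → Fin d,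
          star (N (splitE d P (x, w)) v)
            * (if x = v Q then N (splitE d P (y, w)) (Function.update v Q y) else 0))
      = ∑ t : Fin d, ∑ z : {i : Fin k // i ≠ Q} → Fin d, ∑ x : Fin d,
          ∑ w : {i : Fin k // i ≠ P} → Fin d,
          star (N (splitE d P (x, w)) (splitE d Q (t, z)))
            * (if x = t then N (splitE d P (y, w)) (splitE d Q (y, z)) else 0) := by
    intro y
    rw [sum_split Q]
    refine Finset.sum_congr rfl fun t _ => Finset.sum_congr rfl fun z _ => ?_
    refine Finset.sum_congr rfl fun x _ => Finset.sum_congr rfl fun w _ => ?_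
    rw [splitE_apply_self, update_splitE]
  simp only [h3]
  -- eliminate t = x : inner over x with factor (if x = t ...)
  have h4 : ∀ (y t : Fin d) (z : {i : Fin k // i ≠ Q} → Fin d),
      (∑ x : Fin d, ∑ w : {i : Fin k // i ≠ P} → Fin d,
          star (N (splitE d P (x, w)) (splitE d Q (t, z)))
            * (if x = t then N (splitE d P (y, w)) (splitE d Q (y, z)) else 0))
      = ∑ w : {i : Fin k // i ≠ P} → Fin d,
          star (N (splitE d P (t, w)) (splitE d Q (t, z)))
            * N (splitE d P (y, w)) (splitE d Q (y, z)) := by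
    intro y t z
    rw [Finset.sum_eq_single t]
    · exact Finset.sum_congr rfl fun w _ => by rw [if_pos rfl]
    · intro x _ hx
      apply Finset.sum_eq_zero; intro w _
      rw [if_neg hx, mul_zero]
    · intro h; exact absurd (Finset.mem_univ _) h
  simp only [h4]
  -- now : ∑ y ∑ t ∑ z ∑ w, star (N (spl P (t,w)) (spl Q (t,z))) * N (spl P (y,w)) (spl Q (y,z))
  -- regroup into ∑ z ∑ w (∑ t star ...) * (∑ y ...)
  have h5 : ∀ y : Fin d,
      (∑ t : Fin d, ∑ z : {i : Fin k // i ≠ Q} → Fin d,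
          ∑ w : {i : Fin k // i ≠ P} → Fin d,
          star (N (splitE d P (t, w)) (splitE d Q (t, z)))
            * N (splitE d P (y, w)) (splitE d Q (y, z)))
      = ∑ z : {i : Fin k // i ≠ Q} → Fin d, ∑ w : {i : Fin k // i ≠ P} → Fin d,
          star (G w z) * N (splitE d P (y, w)) (splitE d Q (y, z)) := by
    intro y
    rw [Finset.sum_comm]
    refine Finset.sum_congr rfl fun z _ => ?_
    rw [Finset.sum_comm]
    refine Finset.sum_congr rfl fun w _ => ?_
    rw [hG, ← Finset.sum_mul]
    congr 1
    rw [star_sum]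
  simp only [h5]
  rw [Finset.sum_comm]
  refine Finset.sum_congr rfl fun z _ => ?_
  rw [Finset.sum_comm]
  refine Finset.sum_congr rfl fun w _ => ?_
  rw [← Finset.mul_sum]

end E5

namespace E6
open Aux E2 E3 E4 E5

lemma star_mul_self_sum {α : Type*} [Fintype α] (f : α → ℂ) :
    ∑ a, star (f a) * f a = ((∑ a, Complex.normSq (f a) : ℝ) : ℂ) := by
  rw [Complex.ofReal_sum]
  exact Finset.sum_congr rfl fun a _ => by
    rw [Complex.star_def, ← Complex.normSq_eq_conj_mul_self]

lemma cs {α : Type*} [Fintype α] (f g : α → ℂ) :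
    ‖∑ a, star (f a) * g a‖ ^ 2
      ≤ (∑ a, Complex.normSq (f a)) * (∑ a, Complex.normSq (g a)) := by
  classical
  let x : EuclideanSpace ℂ α := (WithLp.equiv 2 (α → ℂ)).symm f
  let y : EuclideanSpace ℂ α := (WithLp.equiv 2 (α → ℂ)).symm g
  have hinner : (inner ℂ x y : ℂ) = ∑ a, star (f a) * g a := by
    rw [PiLp.inner_apply]
    exact Finset.sum_congr rfl fun a _ => by
      show inner ℂ (f a) (g a) = star (f a) * g a
      rw [RCLike.inner_apply, Complex.star_def]; ring
  have hb := norm_inner_le_norm (𝕜 := ℂ) x y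
  have hx : ‖x‖ ^ 2 = ∑ a, Complex.normSq (f a) := by
    rw [EuclideanSpace.norm_eq, Real.sq_sqrt (Finset.sum_nonneg fun a _ => sq_nonneg _)]
    exact Finset.sum_congr rfl fun a _ => by
      rw [Complex.sq_norm]; rfl
  have hy : ‖y‖ ^ 2 = ∑ a, Complex.normSq (g a) := by
    rw [EuclideanSpace.norm_eq, Real.sq_sqrt (Finset.sum_nonneg fun a _ => sq_nonneg _)]
    exact Finset.sum_congr rfl fun a _ => by
      rw [Complex.sq_norm]; rfl
  calc ‖∑ a, star (f a) * g a‖ ^ 2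
      = ‖(inner ℂ x y : ℂ)‖ ^ 2 := by rw [hinner]
    _ ≤ (‖x‖ * ‖y‖) ^ 2 := by
        have h0 : (0:ℝ) ≤ ‖(inner ℂ x y : ℂ)‖ := norm_nonneg _
        nlinarith [norm_nonneg x, norm_nonneg y]
    _ = (∑ a, Complex.normSq (f a)) * (∑ a, Complex.normSq (g a)) := by
        rw [mul_pow, hx, hy]

end E6

namespace E7
open Aux E2 E3 E4 E5 E6
variable {d k : ℕ}

lemma G_eq : embedOne (d := d) (Psym k d)
    = ((k.factorial : ℂ))⁻¹ • ∑ π : Equiv.Perm (Fin k),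
        Pm d (Equiv.Perm.decomposeFin.symm (0, π)) := by
  rw [psym_eq, embedOne_smul, embedOne_sum]
  simp only [embedOne_Pm]

lemma S_mul_G : Psym (k+1) d * embedOne (Psym k d) = Psym (k+1) d := by
  rw [G_eq, Matrix.mul_smul, Finset.mul_sum]
  simp only [psym_mul_Pm, Finset.sum_const, Finset.card_univ, Fintype.card_perm,
    Fintype.card_fin]
  rw [← Nat.cast_smul_eq_nsmul ℂ, smul_smul,
    inv_mul_cancel₀ (by exact_mod_cast k.factorial_ne_zero), one_smul]

lemma G_herm : (embedOne (d := d) (Psym k d))ᴴ = embedOne (Psym k d) := by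
  rw [embedOne_conjT, psym_herm]

lemma G_mul_S : embedOne (Psym k d) * Psym (k+1) d = Psym (k+1) d := by
  have := congrArg Matrix.conjTranspose (S_mul_G (d := d) (k := k))
  rwa [Matrix.conjTranspose_mul, G_herm, psym_herm] at this

section WithN
variable (N : Matrix (Fin k → Fin d) (Fin k → Fin d) ℂ)
  (hN : Psym k d * N = N) (hN' : N * Psym k d = N)

include hN hN' in
lemma trace_expand :
    ((embedOne N)ᴴ * (Psym (k+1) d * (embedOne N * Psym (k+1) d))).trace
      = ((k+1 : ℂ))⁻¹ * (((k+1 : ℂ))⁻¹ * ∑ p : Fin (k+1), ∑ q : Fin (k+1),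
          ((embedOne N)ᴴ * Pm d (Equiv.swap 0 p) * (embedOne N * Pm d (Equiv.swap 0 q))).trace) := by
  have hGA : embedOne (Psym k d) * embedOne N = embedOne N := by
    rw [embedOne_mul, hN]
  have hAG : embedOne N * embedOne (Psym k d) = embedOne N := by
    rw [embedOne_mul, hN']
  have hGAH : embedOne (Psym k d) * (embedOne N)ᴴ = (embedOne N)ᴴ := by
    have := congrArg Matrix.conjTranspose hAG
    rwa [Matrix.conjTranspose_mul, G_herm] at this
  set A := embedOne N with hA
  set G := embedOne (Psym k d) with hGdef
  set W : Fin (k+1) → Matrix (Fin (k+1) → Fin d) (Fin (k+1) → Fin d) ℂ :=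
    fun p => Pm d (Equiv.swap 0 p) with hW
  have hAS : A * Psym (k+1) d = ((k+1:ℂ))⁻¹ • ∑ q, A * (W q * G) := by
    rw [psym_succ, Matrix.mul_smul, Finset.mul_sum]
  have hSAS : Psym (k+1) d * (A * Psym (k+1) d)
      = ((k+1:ℂ))⁻¹ • (((k+1:ℂ))⁻¹ • ∑ p, ∑ q, (W p * G) * (A * (W q * G))) := by
    rw [hAS, Matrix.mul_smul, psym_succ, Matrix.smul_mul]
    simp only [Matrix.smul_mul, Matrix.mul_smul, Finset.sum_mul, Finset.mul_sum, smul_smul]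
    rw [Finset.sum_comm]
  have hterm : ∀ p q, (Aᴴ * ((W p * G) * (A * (W q * G)))).trace
      = (Aᴴ * W p * (A * W q)).trace := by
    intro p q
    have e1 : Aᴴ * ((W p * G) * (A * (W q * G))) = (Aᴴ * W p * (A * W q)) * G := by
      simp only [← Matrix.mul_assoc]
      rw [Matrix.mul_assoc (Aᴴ * W p) G A, hGA]
    rw [e1, Matrix.trace_mul_comm]
    simp only [← Matrix.mul_assoc]
    rw [hGAH]
  rw [hSAS, Matrix.mul_smul, Matrix.trace_smul, Matrix.mul_smul, Matrix.trace_smul,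
    Matrix.mul_sum, Matrix.trace_sum, smul_eq_mul, smul_eq_mul]
  congr 1
  congr 1
  refine Finset.sum_congr rfl fun p _ => ?_
  rw [Matrix.mul_sum, Matrix.trace_sum]
  exact Finset.sum_congr rfl fun q _ => hterm p q

lemma CN_real : CN N = ((∑ u, ∑ v, Complex.normSq (N u v) : ℝ) : ℂ) := by
  rw [CN, Complex.ofReal_sum]
  exact Finset.sum_congr rfl fun u _ => star_mul_self_sum _

lemma T_re_nonneg (p q : Fin (k+1)) :
    0 ≤ (((embedOne N)ᴴ * Pm d (Equiv.swap 0 p) * (embedOne N * Pm d (Equiv.swap 0 q))).trace).re := by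
  have hR : (0:ℝ) ≤ ∑ u, ∑ v, Complex.normSq (N u v) :=
    Finset.sum_nonneg fun u _ => Finset.sum_nonneg fun v _ => Complex.normSq_nonneg _
  have hCN : 0 ≤ (CN N).re := by
    rw [CN_real, Complex.ofReal_re]; exact hR
  induction p using Fin.cases with
  | zero =>
    induction q using Fin.cases with
    | zero =>
      rw [T00]
      have : ((d:ℂ) * CN N).re = (d:ℝ) * (CN N).re := by
        rw [show ((d:ℂ)) = (((d:ℝ)):ℂ) from by push_cast; rfl, Complex.re_ofReal_mul]
      rw [this]
      positivity
    | succ Q => rw [T0succ]; exact hCN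
  | succ P =>
    induction q using Fin.cases with
    | zero => rw [Tsucc0]; exact hCN
    | succ Q =>
      rw [Tsuccsucc]
      have hz : ∀ z : {i : Fin k // i ≠ Q} → Fin d,
          (∑ w : {i : Fin k // i ≠ P} → Fin d,
            star (∑ x : Fin d, N (splitE d P (x, w)) (splitE d Q (x, z)))
              * (∑ x : Fin d, N (splitE d P (x, w)) (splitE d Q (x, z))))
          = ((∑ w : {i : Fin k // i ≠ P} → Fin d,
              Complex.normSq (∑ x : Fin d, N (splitE d P (x, w)) (splitE d Q (x, z))) : ℝ) : ℂ) :=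
        fun z => star_mul_self_sum _
      simp only [hz]
      rw [← Complex.ofReal_sum, Complex.ofReal_re]
      exact Finset.sum_nonneg fun z _ => Finset.sum_nonneg fun w _ => Complex.normSq_nonneg _

include hN hN' in
lemma core :
    (d:ℝ) * (∑ u, ∑ v, Complex.normSq (N u v))
      ≤ (((k:ℝ)+1))^2
          * (((embedOne N)ᴴ * (Psym (k+1) d * (embedOne N * Psym (k+1) d))).trace).re := by
  rw [trace_expand N hN hN']
  have hc : ((k+1:ℂ))⁻¹ = (((((k:ℝ)+1))⁻¹ : ℝ) : ℂ) := by push_cast; rfl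
  rw [hc, Complex.re_ofReal_mul, Complex.re_ofReal_mul]
  set X : ℝ := (∑ p : Fin (k+1), ∑ q : Fin (k+1),
      ((embedOne N)ᴴ * Pm d (Equiv.swap 0 p) * (embedOne N * Pm d (Equiv.swap 0 q))).trace).re with hX
  have hXsum : X = ∑ p : Fin (k+1), (∑ q : Fin (k+1),
      ((embedOne N)ᴴ * Pm d (Equiv.swap 0 p) * (embedOne N * Pm d (Equiv.swap 0 q))).trace).re := by
    rw [hX, Complex.re_sum]
  have h00 : (d:ℝ) * (∑ u, ∑ v, Complex.normSq (N u v))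
      = (((embedOne N)ᴴ * Pm d (Equiv.swap 0 (0 : Fin (k+1)))
          * (embedOne N * Pm d (Equiv.swap 0 (0 : Fin (k+1))))).trace).re := by
    rw [T00, CN_real, show ((d:ℂ)) = (((d:ℝ)):ℂ) from by push_cast; rfl,
      ← Complex.ofReal_mul, Complex.ofReal_re]
  have hge : (d:ℝ) * (∑ u, ∑ v, Complex.normSq (N u v)) ≤ X := by
    rw [hXsum]
    have h0 : (∑ q : Fin (k+1),
        ((embedOne N)ᴴ * Pm d (Equiv.swap 0 (0 : Fin (k+1)))
          * (embedOne N * Pm d (Equiv.swap 0 q))).trace).re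
        = ∑ q : Fin (k+1), (((embedOne N)ᴴ * Pm d (Equiv.swap 0 (0 : Fin (k+1)))
          * (embedOne N * Pm d (Equiv.swap 0 q))).trace).re := Complex.re_sum _ _
    calc (d:ℝ) * (∑ u, ∑ v, Complex.normSq (N u v))
        ≤ (∑ q : Fin (k+1), ((embedOne N)ᴴ * Pm d (Equiv.swap 0 (0 : Fin (k+1)))
            * (embedOne N * Pm d (Equiv.swap 0 q))).trace).re := by
          rw [h00, h0]
          exact Finset.single_le_sum (fun q _ => T_re_nonneg N 0 q) (Finset.mem_univ 0)
      _ ≤ _ := by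
          refine Finset.single_le_sum (f := fun p : Fin (k+1) => (∑ q : Fin (k+1),
            ((embedOne N)ᴴ * Pm d (Equiv.swap 0 p)
              * (embedOne N * Pm d (Equiv.swap 0 q))).trace).re)
            (fun p _ => ?_) (Finset.mem_univ (0 : Fin (k+1)))
          rw [Complex.re_sum]
          exact Finset.sum_nonneg fun q _ => T_re_nonneg N p q
  have hk1 : ((k:ℝ)+1) ≠ 0 := by positivity
  calc (d:ℝ) * (∑ u, ∑ v, Complex.normSq (N u v)) ≤ X := hge
    _ = ((k:ℝ)+1)^2 * (((k:ℝ)+1)⁻¹ * (((k:ℝ)+1)⁻¹ * X)) := by field_simp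
    _ = _ := rfl

end WithN
end E7

namespace E8
open Aux E2 E3 E4 E5 E6 E7
variable {d k : ℕ}

lemma trace_conj_self {ι : Type*} [Fintype ι] [DecidableEq ι] (X : Matrix ι ι ℂ) :
    (Xᴴ * X).trace = ((∑ i, ∑ j, Complex.normSq (X j i) : ℝ) : ℂ) := by
  rw [Matrix.trace]
  simp only [Matrix.diag, Matrix.mul_apply, Matrix.conjTranspose_apply]
  rw [Complex.ofReal_sum]
  exact Finset.sum_congr rfl fun i _ => star_mul_self_sum (fun j => X j i)

lemma trace_BH_rho (N : Matrix (Fin k → Fin d) (Fin k → Fin d) ℂ)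
    (ψ : (Fin (k+1) → Fin d) → ℂ) :
    ((embedOne N)ᴴ * Matrix.vecMulVec ψ (star ψ)).trace
      = ∑ u, ∑ v, star (N u v) *
          (∑ x : Fin d, ψ (Fin.cons x u) * star (ψ (Fin.cons x v))) := by
  rw [Matrix.trace]
  simp only [Matrix.diag, Matrix.mul_apply, Matrix.conjTranspose_apply,
    Matrix.vecMulVec_apply, Pi.star_apply]
  rw [sum_cons (fun i => ∑ j, star (embedOne N j i) * (ψ j * star (ψ i)))]
  have h1 : ∀ (y : Fin d) (v : Fin k → Fin d),
      (∑ j, star (embedOne N j (Fin.cons y v)) * (ψ j * star (ψ (Fin.cons y v))))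
        = ∑ u, star (N u v) * (ψ (Fin.cons y u) * star (ψ (Fin.cons y v))) := by
    intro y v
    rw [sum_cons (fun j => star (embedOne N j (Fin.cons y v)) * (ψ j * star (ψ (Fin.cons y v))))]
    rw [Finset.sum_eq_single y]
    · refine Finset.sum_congr rfl fun u _ => ?_
      rw [embedOne_apply_cons, if_pos rfl]
    · intro x _ hx
      apply Finset.sum_eq_zero; intro u _
      rw [embedOne_apply_cons, if_neg hx, star_zero, zero_mul]
    · intro h; exact absurd (Finset.mem_univ _) h
  simp only [h1]
  rw [Finset.sum_comm]
  have hswap : ∀ v : Fin k → Fin d,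
      (∑ y : Fin d, ∑ u : Fin k → Fin d,
        star (N u v) * (ψ (Fin.cons y u) * star (ψ (Fin.cons y v))))
      = ∑ u : Fin k → Fin d, ∑ y : Fin d,
          star (N u v) * (ψ (Fin.cons y u) * star (ψ (Fin.cons y v))) :=
    fun v => Finset.sum_comm
  simp only [hswap]
  rw [Finset.sum_comm]
  refine Finset.sum_congr rfl fun u _ => Finset.sum_congr rfl fun v _ => ?_
  rw [Finset.mul_sum]

lemma trace_rho_sq (ψ : (Fin (k+1) → Fin d) → ℂ)
    (hψ : ∑ i, Complex.normSq (ψ i) = 1) :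
    (Matrix.vecMulVec ψ (star ψ) * Matrix.vecMulVec ψ (star ψ)).trace = 1 := by
  rw [Matrix.trace]
  simp only [Matrix.diag, Matrix.mul_apply, Matrix.vecMulVec_apply, Pi.star_apply]
  have h1 : ∀ i j : Fin (k+1) → Fin d,
      ψ i * star (ψ j) * (ψ j * star (ψ i)) = (ψ i * star (ψ i)) * (ψ j * star (ψ j)) := by
    intro i j; ring
  simp only [h1]
  rw [← Finset.sum_mul_sum]
  have h2 : (∑ i, ψ i * star (ψ i)) = 1 := by
    have : ∀ i : Fin (k+1) → Fin d, ψ i * star (ψ i) = ((Complex.normSq (ψ i) : ℝ) : ℂ) := by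
      intro i; rw [Complex.star_def, Complex.mul_conj]
    simp only [this]
    rw [← Complex.ofReal_sum, hψ, Complex.ofReal_one]
  rw [h2, one_mul]

end E8

open Aux E2 E3 E4 E5 E6 E7 E8

/-- For a unit vector `ψ ∈ Sym^n(ℂ^d)` (with `n = k+1`) and `P_{n,n}` the
Hilbert–Schmidt-orthogonal projection onto the orthogonal complement of
`L_{n−1} = {P_{Sym^n}(1_d ⊗ M̃)P_{Sym^n}}`, the pure state `ρ = |ψ⟩⟨ψ|` satisfies
`tr[ρ P_{n,n}(ρ)] ≥ 1 − n²/d`. -/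
theorem overlap_with_largest_irrep (k d : ℕ) (hd : 0 < d)
    (ψ : (Fin (k + 1) → Fin d) → ℂ)
    (hψsym : (Psym (k + 1) d).mulVec ψ = ψ)
    (hψnorm : ∑ i, ‖ψ i‖ ^ 2 = 1)
    (Pproj : Matrix (Fin (k + 1) → Fin d) (Fin (k + 1) → Fin d) ℂ →ₗ[ℂ]
             Matrix (Fin (k + 1) → Fin d) (Fin (k + 1) → Fin d) ℂ)
    (hPmem : ∀ X, ∃ Mt : Matrix (Fin k → Fin d) (Fin k → Fin d) ℂ,
      X - Pproj X = Psym (k + 1) d * embedOne Mt * Psym (k + 1) d)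
    (hPorth : ∀ X, ∀ Mt : Matrix (Fin k → Fin d) (Fin k → Fin d) ℂ,
      ((Psym (k + 1) d * embedOne Mt * Psym (k + 1) d)ᴴ * Pproj X).trace = 0) :
    1 - ((k + 1 : ℝ)) ^ 2 / d ≤
      ((Matrix.vecMulVec ψ (star ψ) * Pproj (Matrix.vecMulVec ψ (star ψ))).trace).re := by
  classical
  have hψnormSq : ∑ i, Complex.normSq (ψ i) = 1 := by
    refine Eq.trans ?_ hψnorm
    exact Finset.sum_congr rfl fun i _ => (Complex.sq_norm _).symm
  set ρ := Matrix.vecMulVec ψ (star ψ) with hρdef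
  obtain ⟨Mt, hM⟩ := hPmem ρ
  set N := Psym k d * Mt * Psym k d with hNdef
  set B := embedOne N with hB
  set E := Psym (k + 1) d * embedOne Mt * Psym (k + 1) d with hEdef
  set S := Psym (k + 1) d with hS
  have hN : Psym k d * N = N := by
    rw [hNdef]
    simp only [← Matrix.mul_assoc]
    rw [psym_sq]
  have hN' : N * Psym k d = N := by
    rw [hNdef, Matrix.mul_assoc (Psym k d * Mt) (Psym k d) (Psym k d), psym_sq]
  have hPρ : Pproj ρ = ρ - E := by rw [← hM, sub_sub_cancel]
  have hρherm : ρᴴ = ρ := by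
    rw [hρdef]
    ext i j
    simp only [Matrix.conjTranspose_apply, Matrix.vecMulVec_apply, Pi.star_apply,
      star_mul', star_star]
    ring
  have hSρ : S * ρ = ρ := by
    ext i j
    rw [Matrix.mul_apply]
    simp only [hρdef, Matrix.vecMulVec_apply, Pi.star_apply]
    simp only [← mul_assoc]
    rw [← Finset.sum_mul]
    have : ∑ l, S i l * ψ l = ψ i := by
      have h := congrFun hψsym i
      simpa [Matrix.mulVec, dotProduct] using h
    rw [this]
  have hSherm : Sᴴ = S := by rw [hS, psym_herm]
  have hSS : S * S = S := by rw [hS, psym_sq]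
  have hρS : ρ * S = ρ := by
    have h := congrArg Matrix.conjTranspose hSρ
    rwa [Matrix.conjTranspose_mul, hρherm, hSherm] at h
  set R : ℝ := ∑ i, ∑ j, Complex.normSq (E j i) with hRdef
  have hR0 : 0 ≤ R :=
    Finset.sum_nonneg fun i _ => Finset.sum_nonneg fun j _ => Complex.normSq_nonneg _
  have hEE : (Eᴴ * E).trace = (R : ℂ) := trace_conj_self E
  have hEB : E = S * (B * S) := by
    rw [hEdef, hB, hNdef, ← embedOne_mul, ← embedOne_mul]
    simp only [← Matrix.mul_assoc]
    rw [hS, S_mul_G, Matrix.mul_assoc (Psym (k+1) d * embedOne Mt) (embedOne (Psym k d))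
      (Psym (k+1) d), G_mul_S]
  have ht1 : (Eᴴ * ρ).trace = (R : ℂ) := by
    have hρsplit : ρ = E + Pproj ρ := by rw [hPρ]; abel
    calc (Eᴴ * ρ).trace = (Eᴴ * (E + Pproj ρ)).trace := by rw [← hρsplit]
      _ = (Eᴴ * E).trace + (Eᴴ * Pproj ρ).trace := by
          rw [Matrix.mul_add, Matrix.trace_add]
      _ = (R : ℂ) := by rw [hEE, hEdef, hPorth ρ Mt, add_zero]
  have ht2 : (Bᴴ * ρ).trace = (R : ℂ) := by
    rw [← ht1, hEB]
    simp only [Matrix.conjTranspose_mul, hSherm, ← Matrix.mul_assoc]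
    rw [Matrix.mul_assoc (S * Bᴴ) S ρ, hSρ, Matrix.mul_assoc S Bᴴ ρ,
      Matrix.trace_mul_comm S (Bᴴ * ρ), Matrix.mul_assoc Bᴴ ρ S, hρS]
  have ht3 : (Bᴴ * (S * (B * S))).trace = (R : ℂ) := by
    rw [← hEE, hEB]
    simp only [Matrix.conjTranspose_mul, hSherm, Matrix.mul_assoc]
    rw [← Matrix.mul_assoc S S (B * S), hSS, Matrix.trace_mul_comm S (Bᴴ * (S * (B * S)))]
    simp only [Matrix.mul_assoc]
    rw [hSS]
  have hcore' : (d:ℝ) * (∑ u, ∑ v, Complex.normSq (N u v)) ≤ ((k:ℝ)+1)^2 * R := by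
    have h := core N hN hN'
    rwa [show ((embedOne N)ᴴ * (Psym (k+1) d * (embedOne N * Psym (k+1) d))).trace = (R:ℂ)
      from ht3, Complex.ofReal_re] at h
  set nN : ℝ := ∑ u, ∑ v, Complex.normSq (N u v) with hnN
  set ρ' : (Fin k → Fin d) → (Fin k → Fin d) → ℂ :=
    fun u v => ∑ x : Fin d, ψ (Fin.cons x u) * star (ψ (Fin.cons x v)) with hρ'
  have htval : (R:ℂ) = ∑ u, ∑ v, star (N u v) * ρ' u v := by
    rw [← ht2, hB, hρdef, trace_BH_rho]
  have hcs : R^2 ≤ nN * (∑ u, ∑ v, Complex.normSq (ρ' u v)) := by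
    have h := cs (fun p : (Fin k → Fin d) × (Fin k → Fin d) => N p.1 p.2)
      (fun p => ρ' p.1 p.2)
    rw [Fintype.sum_prod_type, Fintype.sum_prod_type, Fintype.sum_prod_type] at h
    rw [← htval] at h
    rwa [Complex.norm_real, Real.norm_eq_abs, sq_abs] at h
  have hρ'le : (∑ u, ∑ v, Complex.normSq (ρ' u v)) ≤ 1 := by
    set h1 : (Fin k → Fin d) → ℝ := fun w => ∑ x : Fin d, Complex.normSq (ψ (Fin.cons x w))
      with hh1
    have hent : ∀ u v, Complex.normSq (ρ' u v) ≤ h1 v * h1 u := by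
      intro u v
      have h := cs (fun x : Fin d => ψ (Fin.cons x v)) (fun x => ψ (Fin.cons x u))
      have he : (∑ x : Fin d, star (ψ (Fin.cons x v)) * ψ (Fin.cons x u)) = ρ' u v := by
        rw [hρ']
        exact Finset.sum_congr rfl fun x _ => mul_comm _ _
      rw [he] at h
      rwa [Complex.sq_norm] at h
    have hsum1 : (∑ w, h1 w) = 1 := by
      rw [hh1, Finset.sum_comm, ← sum_cons (fun i => Complex.normSq (ψ i))]
      exact hψnormSq
    calc ∑ u, ∑ v, Complex.normSq (ρ' u v) ≤ ∑ u, ∑ v, h1 v * h1 u :=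
        Finset.sum_le_sum fun u _ => Finset.sum_le_sum fun v _ => hent u v
      _ = ∑ u, ∑ v, h1 u * h1 v := by
          exact Finset.sum_congr rfl fun u _ => Finset.sum_congr rfl fun v _ => mul_comm _ _
      _ = (∑ u, h1 u) * (∑ v, h1 v) := (Finset.sum_mul_sum _ _ _ _).symm
      _ = 1 := by rw [hsum1, one_mul]
  have hnN0 : (0:ℝ) ≤ nN :=
    Finset.sum_nonneg fun u _ => Finset.sum_nonneg fun v _ => Complex.normSq_nonneg _
  have hR2 : R^2 ≤ nN := by
    calc R^2 ≤ nN * (∑ u, ∑ v, Complex.normSq (ρ' u v)) := hcs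
      _ ≤ nN * 1 := mul_le_mul_of_nonneg_left hρ'le hnN0
      _ = nN := mul_one _
  have hd' : (0:ℝ) < d := by exact_mod_cast hd
  have hfin : R ≤ ((k:ℝ)+1)^2 / d := by
    rcases eq_or_lt_of_le hR0 with h0 | hpos
    · rw [← h0]
      positivity
    · have h3 : (d:ℝ) * R^2 ≤ ((k:ℝ)+1)^2 * R := by
        calc (d:ℝ) * R^2 ≤ (d:ℝ) * nN := mul_le_mul_of_nonneg_left hR2 hd'.le
          _ ≤ ((k:ℝ)+1)^2 * R := hcore'
      rw [le_div_iff₀ hd']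
      nlinarith [h3, hpos]
  have hρE : (ρ * E).trace = (R:ℂ) := by
    have h4 := Matrix.trace_conjTranspose (ρ * E)
    rw [Matrix.conjTranspose_mul, hρherm, ht1] at h4
    have h5 := congrArg star h4
    rw [star_star, Complex.star_def, Complex.conj_ofReal] at h5
    exact h5.symm
  have hgoal : (ρ * Pproj ρ).trace = 1 - (R:ℂ) := by
    rw [hPρ, Matrix.mul_sub, Matrix.trace_sub,
      show (ρ * ρ).trace = 1 from trace_rho_sq ψ hψnormSq, hρE]
  rw [hgoal, Complex.sub_re, Complex.one_re, Complex.ofReal_re]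
  have : ((k:ℝ) + 1)^2 = ((k + 1 : ℝ))^2 := by push_cast; ring
  linarith [hfin]
end
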